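/- arXiv:0905.2646 — 8 statements merged into one kernel-verified Lean document; each statement's English description precedes it below -/
import Mathlib

section
/- Let w = (w_1, …, w_n) be a probability vector with w_i > 0 for all i, let λ ∈ (0,1], and suppose M(w) is positive definite, D(M(w)^{-1}) is nonzero, and the updated vector w' with w'_i = w_i d_i(w)^λ / Σ_j w_j d_j(w)^λ satisfies that M(w') is positive definite, where d_i(w) = tr(M(w)^{-1} D(M(w)^{-1}) M(w)^{-1} A_i). Then ψ(M(w')^{-1}) ≤ ψ(M(w)^{-1}); equivalently, φ(M(w')) ≥ φ(M(w)) for φ(M) = -ψ(M^{-1}). (General monotonicity of the multiplicative algorithm.) -/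
/-!
By concavity, `ψ (M w')⁻¹ ≤ ψ (M w)⁻¹ + tr (H ((M w')⁻¹ - (M w)⁻¹))` with `H = D (M w)⁻¹`, so it
suffices to show `τ := tr (H (M w')⁻¹) ≤ tr (H (M w)⁻¹) = ∑ wᵢ dᵢ`. Both `∑ wᵢ tᵢ` and `∑ w'ᵢ aᵢ`
equal `τ`, where `tᵢ = tr ((M w')⁻¹ H (M w)⁻¹ Aᵢ)` and `aᵢ = tr ((M w')⁻¹ H (M w')⁻¹ Aᵢ)`, and
`tᵢ² ≤ aᵢ dᵢ` by Cauchy–Schwarz for the form `(X, Y) ↦ tr (Xᵀ H Y Aᵢ)`. Splitting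
`dᵢ = dᵢ^λ dᵢ^(1-λ)`, a second Cauchy–Schwarz gives `τ² ≤ τ (∑ wᵢ dᵢ^λ) (∑ wᵢ dᵢ^(1-λ))`, and
Chebyshev's sum inequality for the similarly ordered `dᵢ^λ`, `dᵢ^(1-λ)` bounds this product
by `∑ wᵢ dᵢ`.
-/

open Matrix Finset

namespace Matrix

variable {l k : Type*} [Fintype l] [Fintype k]

theorem sq_trace_transpose_mul_le (X Y : Matrix l k ℝ) :
    (Xᵀ * Y).trace ^ 2 ≤ (Xᵀ * X).trace * (Yᵀ * Y).trace := by
  simp only [← vec_dotProduct_vec, dotProduct, ← pow_two]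
  exact sum_mul_sq_le_sq_mul_sq _ _ _

theorem trace_transpose_mul_self_nonneg (X : Matrix l k ℝ) : 0 ≤ (Xᵀ * X).trace := by
  rw [← vec_dotProduct_vec]
  exact sum_nonneg fun i _ => mul_self_nonneg _

variable [DecidableEq k] {H A : Matrix k k ℝ}

theorem PosSemidef.exists_eq_transpose_mul_self (hA : A.PosSemidef) :
    ∃ R : Matrix k k ℝ, A = Rᵀ * R := by
  open scoped MatrixOrder in
  obtain ⟨R, hR⟩ := CStarAlgebra.nonneg_iff_eq_star_mul_self.mp hA.nonneg
  exact ⟨R, by rw [hR, star_eq_conjTranspose, conjTranspose_eq_transpose_of_trivial]⟩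

theorem PosSemidef.exists_trace_transpose_mul_mul_mul_eq (hH : H.PosSemidef) (hA : A.PosSemidef) :
    ∃ F : Matrix k k ℝ → Matrix k k ℝ,
      ∀ X Y, (Xᵀ * H * Y * A).trace = ((F X)ᵀ * F Y).trace := by
  obtain ⟨P, rfl⟩ := hH.exists_eq_transpose_mul_self
  obtain ⟨R, rfl⟩ := hA.exists_eq_transpose_mul_self
  refine ⟨fun X => P * X * Rᵀ, fun X Y => ?_⟩
  rw [← Matrix.mul_assoc _ Rᵀ R, trace_mul_comm]
  simp only [transpose_mul, transpose_transpose, Matrix.mul_assoc]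

theorem PosSemidef.trace_transpose_mul_mul_mul_self_nonneg (hH : H.PosSemidef)
    (hA : A.PosSemidef) (X : Matrix k k ℝ) : 0 ≤ (Xᵀ * H * X * A).trace := by
  obtain ⟨F, hF⟩ := hH.exists_trace_transpose_mul_mul_mul_eq hA
  exact hF X X ▸ trace_transpose_mul_self_nonneg (F X)

theorem PosSemidef.sq_trace_transpose_mul_mul_mul_le (hH : H.PosSemidef) (hA : A.PosSemidef)
    (X Y : Matrix k k ℝ) :
    (Xᵀ * H * Y * A).trace ^ 2 ≤ (Xᵀ * H * X * A).trace * (Yᵀ * H * Y * A).trace := by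
  obtain ⟨F, hF⟩ := hH.exists_trace_transpose_mul_mul_mul_eq hA
  simpa only [hF] using sq_trace_transpose_mul_le (F X) (F Y)

end Matrix

theorem Monovary.weighted_sum_mul_sum_le {ι : Type*} [Fintype ι] {w f g : ι → ℝ}
    (hfg : Monovary f g) (hw : ∀ i, 0 ≤ w i) :
    (∑ i, w i * f i) * (∑ i, w i * g i) ≤ (∑ i, w i) * ∑ i, w i * (f i * g i) := by
  set T : ι → ι → ℝ := fun i j => w i * w j * (f i * g i - f i * g j)
  have hT : ∑ i, ∑ j, T i j =
      (∑ i, w i * (f i * g i)) * (∑ i, w i) - (∑ i, w i * f i) * (∑ i, w i * g i) := by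
    simp only [T, sum_mul_sum, ← sum_sub_distrib]
    exact sum_congr rfl fun i _ => sum_congr rfl fun j _ => by ring
  have hsymm : 0 ≤ ∑ i, ∑ j, (T i j + T j i) :=
    sum_nonneg fun i _ => sum_nonneg fun j _ => by
      have := mul_nonneg (mul_nonneg (hw i) (hw j)) (hfg.sub_mul_sub_nonneg i j)
      linarith
  rw [sum_congr rfl fun i _ => sum_add_distrib, sum_add_distrib,
    sum_comm (f := fun j i => T i j)] at hsymm
  linarith

namespace Real

theorem rpow_mul_rpow_one_sub {x : ℝ} (hx : 0 ≤ x) (p : ℝ) : x ^ p * x ^ (1 - p) = x := by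
  rw [← rpow_add' hx (by simp), add_sub_cancel, rpow_one]

theorem monovary_rpow_rpow {ι : Type*} {d : ι → ℝ} (hd : ∀ i, 0 ≤ d i) {p q : ℝ} (hp : 0 ≤ p)
    (hq : 0 ≤ q) : Monovary (fun i => d i ^ p) (fun i => d i ^ q) := fun i j hij =>
  rpow_le_rpow (hd i) (le_of_not_ge fun h => hij.not_ge (rpow_le_rpow (hd j) h hq)) hp

end Real

section MultiplicativeUpdate

variable {ι : Type*} [Fintype ι] {w d : ι → ℝ} {lam : ℝ}

theorem sum_mul_rpow_mul_sum_mul_rpow_one_sub_le (hw : ∀ i, 0 ≤ w i) (hw1 : ∑ i, w i = 1)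
    (hd : ∀ i, 0 ≤ d i) (hlam0 : 0 ≤ lam) (hlam1 : lam ≤ 1) :
    (∑ i, w i * d i ^ lam) * ∑ i, w i * d i ^ (1 - lam) ≤ ∑ i, w i * d i := by
  have := (Real.monovary_rpow_rpow hd hlam0 (sub_nonneg.2 hlam1)).weighted_sum_mul_sum_le hw
  simpa only [hw1, one_mul, Real.rpow_mul_rpow_one_sub (hd _)] using this

theorem sum_mul_le_of_sq_le_mul {a t w' : ι → ℝ} (hw : ∀ i, 0 ≤ w i) (hd : ∀ i, 0 ≤ d i)
    (ha : ∀ i, 0 ≤ a i) (ht : ∀ i, t i ^ 2 ≤ a i * d i)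
    (hw' : ∀ i, w' i = w i * d i ^ lam / ∑ j, w j * d j ^ lam)
    (hta : ∑ i, w i * t i = ∑ i, w' i * a i) :
    ∑ i, w i * t i ≤ (∑ i, w i * d i ^ lam) * ∑ i, w i * d i ^ (1 - lam) := by
  set τ := ∑ i, w i * t i
  set s := ∑ i, w i * d i ^ lam
  set K := ∑ i, w i * d i ^ (1 - lam)
  have hu : ∀ i, 0 ≤ w i * d i ^ lam := fun i => mul_nonneg (hw i) (Real.rpow_nonneg (hd i) _)
  have hv : ∀ i, 0 ≤ w i * d i ^ (1 - lam) := fun i =>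
    mul_nonneg (hw i) (Real.rpow_nonneg (hd i) _)
  -- also when `s = 0`: then `w' = 0` by `x / 0 = 0`, and every `w i * d i ^ lam` vanishes
  have hw's : ∀ i, w' i * s = w i * d i ^ lam := fun i => by
    rw [hw' i]
    exact div_mul_cancel_of_imp fun hs => (sum_eq_zero_iff_of_nonneg fun j _ => hu j).1 hs i
      (mem_univ i)
  have hsq : τ ^ 2 ≤ τ * (s * K) := calc
    τ ^ 2 ≤ (∑ i, w i * d i ^ lam * a i) * K :=
      sum_sq_le_sum_mul_sum_of_sq_le_mul _ (fun i _ => mul_nonneg (hu i) (ha i))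
        (fun i _ => hv i) fun i _ => calc
          (w i * t i) ^ 2 = w i ^ 2 * t i ^ 2 := mul_pow _ _ _
          _ ≤ w i ^ 2 * (a i * (d i ^ lam * d i ^ (1 - lam))) := by
            rw [Real.rpow_mul_rpow_one_sub (hd i)]; gcongr; exact ht i
          _ = w i * d i ^ lam * a i * (w i * d i ^ (1 - lam)) := by ring
    _ = τ * (s * K) := by
      simp only [← hw's, hta, sum_mul]
      exact sum_congr rfl fun i _ => by ring
  rcases le_or_gt τ 0 with hτ | hτ
  · exact hτ.trans (mul_nonneg (sum_nonneg fun i _ => hu i) (sum_nonneg fun i _ => hv i))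
  · nlinarith

end MultiplicativeUpdate

section MomentMatrix

variable {ι k : Type*} [Fintype ι] [Fintype k] [DecidableEq k]

def momentMatrix (A : ι → Matrix k k ℝ) (v : ι → ℝ) : Matrix k k ℝ := ∑ i, v i • A i

theorem sum_mul_trace_mul_inv_momentMatrix_mul {A : ι → Matrix k k ℝ} {v : ι → ℝ}
    (hv : (momentMatrix A v).PosDef) (Z : Matrix k k ℝ) :
    ∑ i, v i * (Z * (momentMatrix A v)⁻¹ * A i).trace = Z.trace := by
  have hdet : IsUnit (momentMatrix A v).det := (isUnit_iff_isUnit_det _).mp hv.isUnit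
  calc ∑ i, v i * (Z * (momentMatrix A v)⁻¹ * A i).trace
      = (Z * (momentMatrix A v)⁻¹ * ∑ i, v i • A i).trace := by
        simp only [Matrix.mul_sum, mul_smul_comm, trace_sum, trace_smul, smul_eq_mul]
    _ = Z.trace := congrArg trace (nonsing_inv_mul_cancel_right _ Z hdet)

theorem trace_mul_inv_momentMatrix_update_le {A : ι → Matrix k k ℝ}
    (hA : ∀ i, (A i).PosSemidef) {H : Matrix k k ℝ} (hH : H.PosSemidef) {w d w' : ι → ℝ}
    {lam : ℝ} (hw : ∀ i, 0 ≤ w i) (hw1 : ∑ i, w i = 1) (hlam0 : 0 ≤ lam) (hlam1 : lam ≤ 1)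
    (hd : ∀ i, d i = ((momentMatrix A w)⁻¹ * H * (momentMatrix A w)⁻¹ * A i).trace)
    (hw' : ∀ i, w' i = w i * d i ^ lam / ∑ j, w j * d j ^ lam)
    (hMw : (momentMatrix A w).PosDef) (hMw' : (momentMatrix A w').PosDef) :
    (H * (momentMatrix A w')⁻¹).trace ≤ (H * (momentMatrix A w)⁻¹).trace := by
  set B := (momentMatrix A w)⁻¹
  set C := (momentMatrix A w')⁻¹
  have hB : Bᵀ = B := by
    simpa only [conjTranspose_eq_transpose_of_trivial] using hMw.inv.isHermitian.eq
  have hC : Cᵀ = C := by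
    simpa only [conjTranspose_eq_transpose_of_trivial] using hMw'.inv.isHermitian.eq
  set a : ι → ℝ := fun i => (C * H * C * A i).trace
  set t : ι → ℝ := fun i => (C * H * B * A i).trace
  have hd0 (i : ι) : 0 ≤ d i := by
    simpa only [hd, hB] using (hH.trace_transpose_mul_mul_mul_self_nonneg (hA i) B)
  have ha0 (i : ι) : 0 ≤ a i := by
    simpa only [hC] using (hH.trace_transpose_mul_mul_mul_self_nonneg (hA i) C)
  have hta (i : ι) : t i ^ 2 ≤ a i * d i := by
    simpa only [hd, hB, hC] using hH.sq_trace_transpose_mul_mul_mul_le (hA i) C B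
  have hsum_t : ∑ i, w i * t i = (C * H).trace := sum_mul_trace_mul_inv_momentMatrix_mul hMw _
  have hsum_a : ∑ i, w' i * a i = (C * H).trace := sum_mul_trace_mul_inv_momentMatrix_mul hMw' _
  have hsum_d : ∑ i, w i * d i = (B * H).trace := by
    simp only [hd]; exact sum_mul_trace_mul_inv_momentMatrix_mul hMw _
  calc (H * C).trace = ∑ i, w i * t i := by rw [hsum_t, trace_mul_comm]
    _ ≤ (∑ i, w i * d i ^ lam) * ∑ i, w i * d i ^ (1 - lam) :=
      sum_mul_le_of_sq_le_mul hw hd0 ha0 hta hw' (hsum_t.trans hsum_a.symm)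
    _ ≤ ∑ i, w i * d i := sum_mul_rpow_mul_sum_mul_rpow_one_sub_le hw hw1 hd0 hlam0 hlam1
    _ = (H * B).trace := by rw [hsum_d, trace_mul_comm]

end MomentMatrix

theorem stmt_0_general {n m : ℕ}
    (A : Fin n → Matrix (Fin m) (Fin m) ℝ) (hA : ∀ i, (A i).PosSemidef)
    (ψ : Matrix (Fin m) (Fin m) ℝ → ℝ)
    (D : Matrix (Fin m) (Fin m) ℝ → Matrix (Fin m) (Fin m) ℝ)
    -- (i) `D M` is symmetric positive semidefinite for positive definite `M`
    (hDpsd : ∀ M : Matrix (Fin m) (Fin m) ℝ, M.PosDef → (D M).PosSemidef)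
    -- (ii) `ψ` is concave with supergradient `D`
    (hconc : ∀ M₁ M₂ : Matrix (Fin m) (Fin m) ℝ, M₁.PosDef → M₂.PosDef →
      ψ M₂ ≤ ψ M₁ + (D M₁ * (M₂ - M₁)).trace)
    -- the moment matrix map
    (M : (Fin n → ℝ) → Matrix (Fin m) (Fin m) ℝ)
    (hM : ∀ v : Fin n → ℝ, M v = ∑ i, v i • A i)
    -- the design `w` : a probability vector with positive weights
    (w : Fin n → ℝ) (hw : ∀ i, 0 < w i) (hw1 : ∑ i, w i = 1)
    -- the power parameter
    (lam : ℝ) (hlam0 : 0 < lam) (hlam1 : lam ≤ 1)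
    -- the sensitivities d_i(w)
    (d : Fin n → ℝ)
    (hd : ∀ i, d i = ((M w)⁻¹ * D ((M w)⁻¹) * (M w)⁻¹ * A i).trace)
    -- the updated design
    (w' : Fin n → ℝ)
    (hw' : ∀ i, w' i = w i * d i ^ lam / ∑ j, w j * d j ^ lam)
    -- conditions of Theorem 1
    (hMwpos : (M w).PosDef)
    (hMw'pos : (M w').PosDef) :
    ψ ((M w')⁻¹) ≤ ψ ((M w)⁻¹) := by
  obtain rfl : M = momentMatrix A := funext hM
  have hstep := trace_mul_inv_momentMatrix_update_le hA (hDpsd _ hMwpos.inv)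
    (fun i => (hw i).le) hw1 hlam0.le hlam1 hd hw' hMwpos hMw'pos
  have hsuper := hconc _ _ hMwpos.inv hMw'pos.inv
  rw [Matrix.mul_sub, trace_sub] at hsuper
  linarith

/-- General monotonicity of the multiplicative algorithm (Theorem 1).
`ψ` is a criterion on positive definite matrices with supergradient map `D`
(so that `ψ` is increasing and concave); one step of the multiplicative
algorithm with power `lam ∈ (0,1]` does not increase `ψ(M(w)⁻¹)`. -/
theorem stmt_0 {n m : ℕ} (hn : 0 < n) (hm : 0 < m)
    (A : Fin n → Matrix (Fin m) (Fin m) ℝ) (hA : ∀ i, (A i).PosSemidef)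
    (ψ : Matrix (Fin m) (Fin m) ℝ → ℝ)
    (D : Matrix (Fin m) (Fin m) ℝ → Matrix (Fin m) (Fin m) ℝ)
    -- (i) `D M` is symmetric positive semidefinite for positive definite `M`
    (hDpsd : ∀ M : Matrix (Fin m) (Fin m) ℝ, M.PosDef → (D M).PosSemidef)
    -- (ii) `ψ` is concave with supergradient `D`
    (hconc : ∀ M₁ M₂ : Matrix (Fin m) (Fin m) ℝ, M₁.PosDef → M₂.PosDef →
      ψ M₂ ≤ ψ M₁ + (D M₁ * (M₂ - M₁)).trace)
    -- the moment matrix map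
    (M : (Fin n → ℝ) → Matrix (Fin m) (Fin m) ℝ)
    (hM : ∀ v : Fin n → ℝ, M v = ∑ i, v i • A i)
    -- the design `w` : a probability vector with positive weights
    (w : Fin n → ℝ) (hw : ∀ i, 0 < w i) (hw1 : ∑ i, w i = 1)
    -- the power parameter
    (lam : ℝ) (hlam0 : 0 < lam) (hlam1 : lam ≤ 1)
    -- the sensitivities d_i(w)
    (d : Fin n → ℝ)
    (hd : ∀ i, d i = ((M w)⁻¹ * D ((M w)⁻¹) * (M w)⁻¹ * A i).trace)
    -- the updated design
    (w' : Fin n → ℝ)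
    (hw' : ∀ i, w' i = w i * d i ^ lam / ∑ j, w j * d j ^ lam)
    -- conditions of Theorem 1
    (hMwpos : (M w).PosDef)
    (hDne : D ((M w)⁻¹) ≠ 0)
    (hMw'pos : (M w').PosDef) :
    ψ ((M w')⁻¹) ≤ ψ ((M w)⁻¹) :=
  stmt_0_general A hA ψ D hDpsd hconc M hM w hw hw1 lam hlam0 hlam1 d hd w' hw' hMwpos hMw'pos
end

section
/- Let w = (w_1, …, w_n) be a probability vector with w_i > 0 for all i, let λ ∈ (0,1], set d_i(w) = tr(M(w)^{-1} A_i), and define w'_i = w_i d_i(w)^λ / Σ_j w_j d_j(w)^λ. If M(w) and M(w') are both positive definite, then det M(w') ≥ det M(w). (Monotonicity of the multiplicative algorithm for the D-criterion φ_0(M) = log det M, for every λ ∈ (0,1].) -/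
/-!
Choose `C` with `Cᴴ M(w) C = 1` and `Cᴴ M(w') C = diag μ` (simultaneous diagonalization), so that
`det M(w') = det M(w) · ∏ⱼ μⱼ`. The numbers `bᵢⱼ = (Cᴴ Aᵢ C)ⱼⱼ ≥ 0` satisfy `∑ᵢ wᵢ bᵢⱼ = 1`,
`∑ⱼ bᵢⱼ = dᵢ` and `μⱼ = ∑ᵢ w'ᵢ bᵢⱼ`. Jensen's inequality for `log` in each column `j` (weights
`wᵢ bᵢⱼ`) gives `∑ⱼ log μⱼ ≥ λ ∑ᵢ wᵢ dᵢ log dᵢ - m log ∑ᵢ wᵢ dᵢ^λ`. Since `∑ᵢ wᵢ dᵢ = m`,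
convexity of `x log x` and concavity of `x ^ λ` make the right-hand side nonnegative.
-/

open Matrix Finset Real
open scoped ComplexOrder

theorem Real.log_rpow_of_nonneg {x : ℝ} (hx : 0 ≤ x) (y : ℝ) : log (x ^ y) = y * log x := by
  rcases hx.eq_or_lt with rfl | hx
  · rcases eq_or_ne y 0 with rfl | hy
    · simp
    · simp [zero_rpow hy]
  · exact log_rpow hx y

variable {ι κ : Type*} [Fintype ι] [Fintype κ]

theorem Real.sum_mul_log_le_log_sum_mul {a x : ι → ℝ} (ha : ∀ i, 0 ≤ a i) (ha1 : ∑ i, a i = 1)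
    (hx : ∀ i, a i ≠ 0 → 0 < x i) : ∑ i, a i * log (x i) ≤ log (∑ i, a i * x i) := by
  classical
  have hsupp {f : ι → ℝ} (hf : ∀ i, a i = 0 → f i = 0) :
      ∑ i with a i ≠ 0, f i = ∑ i, f i :=
    sum_filter_of_ne fun i _ hfi => mt (hf i) hfi
  rw [← hsupp fun i hi => by simp [hi], ← hsupp fun i hi => by simp [hi]]
  refine strictConcaveOn_log_Ioi.concaveOn.le_map_sum (fun i _ => ha i) ?_
    fun i hi => hx i (mem_filter.mp hi).2
  rw [hsupp fun i hi => hi, ha1]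

theorem Real.sum_mul_log_rpow_le {w d : ι → ℝ} {p : ℝ} (hw : ∀ i, 0 ≤ w i) (hw1 : ∑ i, w i = 1)
    (hd : ∀ i, 0 ≤ d i) (hp0 : 0 ≤ p) (hp1 : p ≤ 1) (hS : 0 < ∑ i, w i * d i ^ p) :
    (∑ i, w i * d i) * log (∑ i, w i * d i ^ p) ≤ p * ∑ i, w i * (d i * log (d i)) := by
  set D := ∑ i, w i * d i
  have hD : 0 ≤ D := sum_nonneg fun i _ => mul_nonneg (hw i) (hd i)
  have hpow : ∑ i, w i * d i ^ p ≤ D ^ p := by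
    simpa using (concaveOn_rpow hp0 hp1).le_map_sum (t := univ) (fun i _ => hw i) hw1
      fun i _ => hd i
  have hmulLog : D * log D ≤ ∑ i, w i * (d i * log (d i)) := by
    simpa using convexOn_mul_log.map_sum_le (t := univ) (fun i _ => hw i) hw1 fun i _ => hd i
  calc D * log (∑ i, w i * d i ^ p) ≤ D * (p * log D) := by
        rw [← log_rpow_of_nonneg hD]
        exact mul_le_mul_of_nonneg_left (log_le_log hS hpow) hD
    _ = p * (D * log D) := by ring
    _ ≤ p * ∑ i, w i * (d i * log (d i)) := mul_le_mul_of_nonneg_left hmulLog hp0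

theorem Real.mul_sum_mul_log_le_sum_log {w d : ι → ℝ} {b : ι → κ → ℝ} (hw : ∀ i, 0 ≤ w i)
    (hb : ∀ i j, 0 ≤ b i j) (hcol : ∀ j, ∑ i, w i * b i j = 1) (hd : ∀ i, ∑ j, b i j = d i)
    (p : ℝ) :
    p * ∑ i, w i * (d i * log (d i)) ≤ ∑ j, log (∑ i, w i * b i j * d i ^ p) := by
  have hbd (i : ι) (j : κ) : b i j ≤ d i := hd i ▸ single_le_sum (fun j _ => hb i j) (mem_univ j)
  have hd0 (i : ι) : 0 ≤ d i := hd i ▸ sum_nonneg fun j _ => hb i j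
  have hcolumn (j : κ) : p * ∑ i, w i * b i j * log (d i) ≤ log (∑ i, w i * b i j * d i ^ p) := by
    have hpos (i : ι) (hi : w i * b i j ≠ 0) : 0 < d i ^ p :=
      rpow_pos_of_pos (((hb i j).lt_of_ne' (right_ne_zero_of_mul hi)).trans_le (hbd i j)) p
    calc p * ∑ i, w i * b i j * log (d i) = ∑ i, w i * b i j * log (d i ^ p) := by
          rw [mul_sum]
          congr! 1 with i
          rw [log_rpow_of_nonneg (hd0 i)]
          ring
      _ ≤ _ := sum_mul_log_le_log_sum_mul (fun i => mul_nonneg (hw i) (hb i j)) (hcol j) hpos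
  calc p * ∑ i, w i * (d i * log (d i))
      = ∑ j, p * ∑ i, w i * b i j * log (d i) := by
        simp only [← hd, sum_mul, mul_sum]
        rw [sum_comm]
        congr! 2
        ring
    _ ≤ _ := sum_le_sum fun j _ => hcolumn j

noncomputable def multiplicativeUpdate (w d : ι → ℝ) (p : ℝ) (i : ι) : ℝ :=
  w i * d i ^ p / ∑ j, w j * d j ^ p

theorem one_le_prod_sum_multiplicativeUpdate_mul {w d : ι → ℝ} {b : ι → κ → ℝ} {p : ℝ}
    (hw : ∀ i, 0 ≤ w i) (hw1 : ∑ i, w i = 1) (hb : ∀ i j, 0 ≤ b i j)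
    (hcol : ∀ j, ∑ i, w i * b i j = 1) (hd : ∀ i, ∑ j, b i j = d i) (hp0 : 0 ≤ p) (hp1 : p ≤ 1) :
    1 ≤ ∏ j, ∑ i, multiplicativeUpdate w d p i * b i j := by
  rcases isEmpty_or_nonempty κ with _ | ⟨⟨j₀⟩⟩
  · simp
  set S := ∑ i, w i * d i ^ p
  set N : κ → ℝ := fun j => ∑ i, w i * b i j * d i ^ p
  have hd0 (i : ι) : 0 ≤ d i := hd i ▸ sum_nonneg fun j _ => hb i j
  have hpos (j : κ) : 0 < N j ∧ 0 < S := by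
    obtain ⟨i, -, hi⟩ : ∃ i ∈ univ, (0 : ℝ) < w i * b i j :=
      exists_lt_of_sum_lt (by simp [hcol j])
    have hwi : 0 < w i := pos_of_mul_pos_left hi (hb i j)
    have hdi : 0 < d i ^ p := rpow_pos_of_pos ((pos_of_mul_pos_right hi (hw i)).trans_le
      (hd i ▸ single_le_sum (fun j _ => hb i j) (mem_univ j))) p
    have hdk (k : ι) : 0 ≤ d k ^ p := rpow_nonneg (hd0 k) p
    exact ⟨sum_pos' (fun k _ => mul_nonneg (mul_nonneg (hw k) (hb k j)) (hdk k))
        ⟨i, mem_univ i, mul_pos hi hdi⟩,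
      sum_pos' (fun k _ => mul_nonneg (hw k) (hdk k)) ⟨i, mem_univ i, mul_pos hwi hdi⟩⟩
  have hwd : ∑ i, w i * d i = Fintype.card κ := by
    simp only [← hd, mul_sum]
    rw [sum_comm]
    simp [hcol]
  have hlog : Fintype.card κ * log S ≤ ∑ j, log (N j) :=
    hwd ▸ (sum_mul_log_rpow_le hw hw1 hd0 hp0 hp1 (hpos j₀).2).trans
      (mul_sum_mul_log_le_sum_log hw hb hcol hd p)
  have hμ (j : κ) : ∑ i, multiplicativeUpdate w d p i * b i j = N j / S := by
    simp only [multiplicativeUpdate, N, sum_div]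
    congr! 1 with i
    ring
  rw [prod_congr rfl fun j _ => hμ j,
    ← log_nonneg_iff (prod_pos fun j _ => div_pos (hpos j).1 (hpos j).2),
    log_prod fun j _ => (div_pos (hpos j).1 (hpos j).2).ne',
    sum_congr rfl fun j _ => log_div (hpos j).1.ne' (hpos j).2.ne', sum_sub_distrib, sum_const,
    card_univ, nsmul_eq_mul]
  linarith

namespace Matrix

variable {n R : Type*} [Fintype n] [DecidableEq n] [CommRing R] [StarRing R]

theorem inv_eq_mul_conjTranspose_of_conjTranspose_mul_mul_eq_one {M C : Matrix n n R}
    (h : Cᴴ * M * C = 1) : M⁻¹ = C * Cᴴ :=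
  inv_eq_left_inv <| by rwa [Matrix.mul_assoc, mul_eq_one_comm]

theorem det_eq_det_mul_prod_of_conjTranspose_mul_mul_eq_diagonal {M M' C : Matrix n n R}
    {μ : n → R} (h : Cᴴ * M * C = 1) (h' : Cᴴ * M' * C = diagonal μ) :
    M'.det = M.det * ∏ i, μ i := by
  have hdet := congrArg det h
  have hdet' := congrArg det h'
  simp only [det_mul, det_one, det_diagonal] at hdet hdet'
  linear_combination (-M'.det) * hdet + M.det * hdet'

variable {𝕜 : Type*} [RCLike 𝕜]

theorem PosDef.exists_conjTranspose_mul_mul_eq_one_and_diagonal {M M' : Matrix n n 𝕜}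
    (hM : M.PosDef) (hM' : M'.IsHermitian) :
    ∃ (C : Matrix n n 𝕜) (μ : n → ℝ),
      Cᴴ * M * C = 1 ∧ Cᴴ * M' * C = diagonal (RCLike.ofReal ∘ μ) := by
  obtain ⟨B, hB, rfl⟩ : ∃ B : Matrix n n 𝕜, IsUnit B ∧ M = Bᴴ * B := by
    open scoped MatrixOrder in
    exact CStarAlgebra.isStrictlyPositive_iff_eq_star_mul_self.mp hM.isStrictlyPositive
  have hBB : B⁻¹ᴴ * (Bᴴ * B) * B⁻¹ = 1 := by
    rw [conjTranspose_nonsing_inv, Matrix.mul_assoc, Matrix.mul_assoc Bᴴ,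
      mul_nonsing_inv _ ((isUnit_iff_isUnit_det B).mp hB), Matrix.mul_one,
      nonsing_inv_mul _ ((isUnit_iff_isUnit_det _).mp ((isUnit_conjTranspose B).mpr hB))]
  have hP : (B⁻¹ᴴ * M' * B⁻¹).IsHermitian := isHermitian_conjTranspose_mul_mul _ hM'
  have hU := hP.conjStarAlgAut_star_eigenvectorUnitary
  set U := hP.eigenvectorUnitary
  rw [Unitary.conjStarAlgAut_apply, Unitary.coe_star, star_star, star_eq_conjTranspose] at hU
  have hconj (N : Matrix n n 𝕜) :
      (B⁻¹ * (U : Matrix n n 𝕜))ᴴ * N * (B⁻¹ * U) =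
        (U : Matrix n n 𝕜)ᴴ * (B⁻¹ᴴ * N * B⁻¹) * U := by
    simp only [conjTranspose_mul, Matrix.mul_assoc]
  refine ⟨B⁻¹ * (U : Matrix n n 𝕜), hP.eigenvalues, ?_, ?_⟩
  · rw [hconj, hBB, Matrix.mul_one, ← star_eq_conjTranspose, Unitary.coe_star_mul_self]
  · rwa [hconj]

end Matrix

theorem stmt_1_general {n m : ℕ}
    (A : Fin n → Matrix (Fin m) (Fin m) ℝ) (hA : ∀ i, (A i).PosSemidef)
    (M : (Fin n → ℝ) → Matrix (Fin m) (Fin m) ℝ)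
    (hM : ∀ v : Fin n → ℝ, M v = ∑ i, v i • A i)
    (w : Fin n → ℝ) (hw : ∀ i, 0 < w i) (hw1 : ∑ i, w i = 1)
    (lam : ℝ) (hlam0 : 0 < lam) (hlam1 : lam ≤ 1)
    (d : Fin n → ℝ) (hd : ∀ i, d i = ((M w)⁻¹ * A i).trace)
    (w' : Fin n → ℝ)
    (hw' : ∀ i, w' i = w i * d i ^ lam / ∑ j, w j * d j ^ lam)
    (hMwpos : (M w).PosDef) :
    (M w).det ≤ (M w').det := by
  have hM' : (M w').IsHermitian :=
    hM w' ▸ isSelfAdjoint_sum _ fun i _ => (hA i).isHermitian.smul (.all (w' i))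
  obtain ⟨C, μ, hC, hC'⟩ := hMwpos.exists_conjTranspose_mul_mul_eq_one_and_diagonal hM'
  set b : Fin n → Fin m → ℝ := fun i j => (Cᴴ * A i * C) j j
  have hconj (v : Fin n → ℝ) (j : Fin m) : (Cᴴ * M v * C) j j = ∑ i, v i * b i j := by
    simp [hM, Matrix.mul_sum, Matrix.sum_mul, Matrix.sum_apply, b]
  have hb (i : Fin n) (j : Fin m) : 0 ≤ b i j :=
    ((hA i).conjTranspose_mul_mul_same C).diag_nonneg
  have hcol (j : Fin m) : ∑ i, w i * b i j = 1 := by rw [← hconj, hC, one_apply_eq]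
  have hrow (i : Fin n) : ∑ j, b i j = d i := by
    rw [hd, inv_eq_mul_conjTranspose_of_conjTranspose_mul_mul_eq_one hC, ← trace_mul_cycle]
    rfl
  have hμ (j : Fin m) : μ j = ∑ i, multiplicativeUpdate w d lam i * b i j := by
    have hμj := hconj w' j
    rw [hC', diagonal_apply_eq, show w' = multiplicativeUpdate w d lam from funext hw'] at hμj
    simpa using hμj
  have hprod : 1 ≤ ∏ j, μ j := by
    simpa only [hμ] using one_le_prod_sum_multiplicativeUpdate_mul (fun i => (hw i).le) hw1 hb
      hcol hrow hlam0.le hlam1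
  rw [det_eq_det_mul_prod_of_conjTranspose_mul_mul_eq_diagonal hC hC']
  simpa using le_mul_of_one_le_right hMwpos.det_pos.le hprod

/-- Monotonicity of the multiplicative algorithm for the D-criterion
`φ₀(M) = log det M`, for every power `lam ∈ (0,1]`. -/
theorem stmt_1 {n m : ℕ} (hn : 0 < n) (hm : 0 < m)
    (A : Fin n → Matrix (Fin m) (Fin m) ℝ) (hA : ∀ i, (A i).PosSemidef)
    (M : (Fin n → ℝ) → Matrix (Fin m) (Fin m) ℝ)
    (hM : ∀ v : Fin n → ℝ, M v = ∑ i, v i • A i)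
    (w : Fin n → ℝ) (hw : ∀ i, 0 < w i) (hw1 : ∑ i, w i = 1)
    (lam : ℝ) (hlam0 : 0 < lam) (hlam1 : lam ≤ 1)
    (d : Fin n → ℝ) (hd : ∀ i, d i = ((M w)⁻¹ * A i).trace)
    (w' : Fin n → ℝ)
    (hw' : ∀ i, w' i = w i * d i ^ lam / ∑ j, w j * d j ^ lam)
    (hMwpos : (M w).PosDef) (hMw'pos : (M w').PosDef) :
    (M w).det ≤ (M w').det :=
  stmt_1_general A hA M hM w hw hw1 lam hlam0 hlam1 d hd w' hw' hMwpos
end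

section
/- Let K be an m×r real matrix of full column rank (r ≤ m), let w be a probability vector with w_i > 0 for all i, let λ ∈ (0,1], set d_i(w) = tr(M(w)^{-1} K (Kᵀ M(w)^{-1} K)^{-1} Kᵀ M(w)^{-1} A_i), and define w'_i = w_i d_i(w)^λ / Σ_j w_j d_j(w)^λ. If M(w) and M(w') are both positive definite, then det(Kᵀ M(w')^{-1} K) ≤ det(Kᵀ M(w)^{-1} K). (Monotonicity of the multiplicative algorithm for the D-criterion for Kᵀθ, φ_{0,K}(M) = -log det(Kᵀ M^{-1} K).) -/
/-!
Put `G = Kᵀ M(w)⁻¹ K`, `G' = Kᵀ M(w')⁻¹ K` and `a = tr (G⁻¹ G')`. Since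
`det G' / det G = det (G⁻¹ G') ≤ exp (a - r)` (apply `x ≤ exp (x - 1)` to the eigenvalues),
it suffices to show `a ≤ r`.

For `X = M(w)⁻¹ K`, `Y = M(w')⁻¹ K` the forms `⟨U, V⟩ᵢ = tr (G⁻¹ Uᵀ Aᵢ V)` are positive
semidefinite, `dᵢ = ⟨X, X⟩ᵢ`, and expanding `M(w) = ∑ wᵢ Aᵢ`, `M(w') = ∑ w'ᵢ Aᵢ` gives
`∑ wᵢ dᵢ = r` and `∑ wᵢ ⟨X, Y⟩ᵢ = ∑ w'ᵢ ⟨Y, Y⟩ᵢ = a`. Hence `a = 2 ∑ wᵢ ⟨X, Y⟩ᵢ - ∑ w'ᵢ ⟨Y, Y⟩ᵢ`,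
and Cauchy–Schwarz with AM–GM bounds each term by `wᵢ S dᵢ^(1-λ)`, where `S = ∑ wⱼ dⱼ^λ`.
Finally `S ∑ wᵢ dᵢ^(1-λ) ≤ ∑ wᵢ dᵢ = r` by Chebyshev's sum inequality, since `dᵢ^λ` and
`dᵢ^(1-λ)` are similarly ordered.
-/

open Matrix Finset

open scoped MatrixOrder

lemma two_mul_sub_le_of_sq_le_mul {t c u v : ℝ} (hc : 0 ≤ c) (hu : 0 ≤ u) (hv : 0 ≤ v)
    (ht : t ^ 2 ≤ u * v * c) : 2 * t - u * c ≤ v := by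
  nlinarith [sq_nonneg (u * c - v), mul_nonneg hu hc]

theorem Monovary.sum_mul_sum_le_sum_mul_of_sum_eq_one {ι : Type*} [Fintype ι] {w f g : ι → ℝ}
    (hfg : Monovary f g) (hw : ∀ i, 0 ≤ w i) (hw1 : ∑ i, w i = 1) :
    (∑ i, w i * f i) * (∑ i, w i * g i) ≤ ∑ i, w i * (f i * g i) := by
  have hsign : ∀ i j, 0 ≤ (f i - f j) * (g i - g j) := fun i j => by
    rcases lt_trichotomy (g i) (g j) with h | h | h
    · exact mul_nonneg_of_nonpos_of_nonpos (sub_nonpos.2 (hfg h)) (sub_neg.2 h).le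
    · simp [h]
    · exact mul_nonneg (sub_nonneg.2 (hfg h)) (sub_pos.2 h).le
  have hdouble : 0 ≤ ∑ i, ∑ j, w i * w j * ((f i - f j) * (g i - g j)) :=
    sum_nonneg fun i _ => sum_nonneg fun j _ =>
      mul_nonneg (mul_nonneg (hw i) (hw j)) (hsign i j)
  have hexpand : ∑ i, ∑ j, w i * w j * ((f i - f j) * (g i - g j)) =
      (∑ i, w i * (f i * g i)) * (∑ j, w j) + (∑ i, w i) * (∑ j, w j * (f j * g j))
        - (∑ i, w i * f i) * (∑ j, w j * g j) - (∑ i, w i * g i) * (∑ j, w j * f j) := by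
    simp only [sum_mul_sum, ← sum_add_distrib, ← sum_sub_distrib]
    exact sum_congr rfl fun i _ => sum_congr rfl fun j _ => by ring
  rw [hexpand, hw1] at hdouble
  linarith

lemma monovary_rpow_rpow {ι : Type*} {d : ι → ℝ} (hd : ∀ i, 0 ≤ d i) {p q : ℝ}
    (hp : 0 ≤ p) (hq : 0 ≤ q) : Monovary (fun i => d i ^ p) (fun i => d i ^ q) :=
  fun i j h => Real.rpow_le_rpow (hd i)
    (not_le.1 fun hji => h.not_ge (Real.rpow_le_rpow (hd j) hji hq)).le hp

lemma sum_mul_rpow_pos {ι : Type*} [Fintype ι] {w d : ι → ℝ} (hw : ∀ i, 0 ≤ w i)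
    (hd : ∀ i, 0 ≤ d i) (hwd : 0 < ∑ i, w i * d i) (p : ℝ) : 0 < ∑ i, w i * d i ^ p := by
  obtain ⟨i, -, hi⟩ :=
    exists_lt_of_sum_lt (show ∑ i, (0 : ℝ) < ∑ i, w i * d i by simpa using hwd)
  have hdi : 0 < d i := pos_of_mul_pos_right hi (hw i)
  exact sum_pos' (fun j _ => mul_nonneg (hw j) (Real.rpow_nonneg (hd j) p))
    ⟨i, mem_univ i, mul_pos (pos_of_mul_pos_left hi hdi.le) (Real.rpow_pos_of_pos hdi p)⟩

theorem two_mul_sum_sub_sum_rpow_div_le {ι : Type*} [Fintype ι] {w d c t : ι → ℝ} {lam : ℝ}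
    (hw : ∀ i, 0 ≤ w i) (hw1 : ∑ i, w i = 1) (hd : ∀ i, 0 ≤ d i) (hc : ∀ i, 0 ≤ c i)
    (ht : ∀ i, t i ^ 2 ≤ d i * c i) (hlam0 : 0 ≤ lam) (hlam1 : lam ≤ 1)
    (hwd : 0 < ∑ i, w i * d i) :
    2 * ∑ i, w i * t i - ∑ i, w i * d i ^ lam / (∑ j, w j * d j ^ lam) * c i ≤
      ∑ i, w i * d i := by
  set S := ∑ j, w j * d j ^ lam
  have hS : 0 < S := sum_mul_rpow_pos hw hd hwd lam
  have hsplit : ∀ i, d i ^ lam * d i ^ (1 - lam) = d i := fun i => by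
    rw [← Real.rpow_add' (hd i) (by norm_num), add_sub_cancel, Real.rpow_one]
  have hterm : ∀ i, 2 * t i - d i ^ lam / S * c i ≤ S * d i ^ (1 - lam) := fun i =>
    two_mul_sub_le_of_sq_le_mul (hc i) (by have := hd i; positivity)
      (by have := hd i; positivity)
      (by rw [div_mul_eq_mul_div, mul_left_comm, mul_div_cancel_left₀ _ hS.ne', hsplit]
          exact ht i)
  calc 2 * ∑ i, w i * t i - ∑ i, w i * d i ^ lam / S * c i
      = ∑ i, w i * (2 * t i - d i ^ lam / S * c i) := by
        rw [mul_sum, ← sum_sub_distrib]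
        exact sum_congr rfl fun i _ => by ring
    _ ≤ ∑ i, w i * (S * d i ^ (1 - lam)) :=
        sum_le_sum fun i _ => mul_le_mul_of_nonneg_left (hterm i) (hw i)
    _ = S * ∑ i, w i * d i ^ (1 - lam) := by
        rw [mul_sum]
        exact sum_congr rfl fun i _ => by ring
    _ ≤ ∑ i, w i * (d i ^ lam * d i ^ (1 - lam)) :=
        (monovary_rpow_rpow hd hlam0 (sub_nonneg.2 hlam1)).sum_mul_sum_le_sum_mul_of_sum_eq_one
          hw hw1
    _ = ∑ i, w i * d i := by simp only [hsplit]

namespace Matrix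

variable {m n ι : Type*}

lemma trace_transpose_mul_self_nonneg_s3 [Fintype m] [Fintype n] (E : Matrix m n ℝ) :
    0 ≤ (Eᵀ * E).trace := by
  rw [← vec_dotProduct_vec]
  exact sum_nonneg fun i _ => mul_self_nonneg _

lemma sq_trace_transpose_mul_le_s3 [Fintype m] [Fintype n] (E F : Matrix m n ℝ) :
    (Eᵀ * F).trace ^ 2 ≤ (Eᵀ * E).trace * (Fᵀ * F).trace := by
  simp only [← vec_dotProduct_vec, dotProduct, ← sq]
  exact sum_mul_sq_le_sq_mul_sq _ _ _

lemma PosSemidef.exists_trace_mul_transpose_mul_mul_eq [Fintype m] [Fintype n]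
    [DecidableEq m] [DecidableEq n] {P : Matrix n n ℝ} {A : Matrix m m ℝ}
    (hP : P.PosSemidef) (hA : A.PosSemidef) :
    ∃ (B : Matrix n n ℝ) (C : Matrix m m ℝ), ∀ X Y : Matrix m n ℝ,
      (P * Xᵀ * A * Y).trace = ((C * X * Bᵀ)ᵀ * (C * Y * Bᵀ)).trace := by
  obtain ⟨B, rfl⟩ := CStarAlgebra.nonneg_iff_eq_star_mul_self.mp hP.nonneg
  obtain ⟨C, rfl⟩ := CStarAlgebra.nonneg_iff_eq_star_mul_self.mp hA.nonneg
  refine ⟨B, C, fun X Y => ?_⟩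
  simp only [star_eq_conjTranspose, conjTranspose_eq_transpose_of_trivial, transpose_mul,
    transpose_transpose, Matrix.mul_assoc]
  rw [trace_mul_comm]
  simp only [Matrix.mul_assoc]

lemma PosSemidef.trace_mul_transpose_mul_mul_self_nonneg [Fintype m] [Fintype n]
    [DecidableEq m] [DecidableEq n] {P : Matrix n n ℝ} {A : Matrix m m ℝ}
    (hP : P.PosSemidef) (hA : A.PosSemidef) (X : Matrix m n ℝ) :
    0 ≤ (P * Xᵀ * A * X).trace := by
  obtain ⟨B, C, h⟩ := hP.exists_trace_mul_transpose_mul_mul_eq hA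
  rw [h]
  exact trace_transpose_mul_self_nonneg_s3 _

lemma PosSemidef.sq_trace_mul_transpose_mul_mul_le [Fintype m] [Fintype n]
    [DecidableEq m] [DecidableEq n] {P : Matrix n n ℝ} {A : Matrix m m ℝ}
    (hP : P.PosSemidef) (hA : A.PosSemidef) (X Y : Matrix m n ℝ) :
    (P * Xᵀ * A * Y).trace ^ 2 ≤ (P * Xᵀ * A * X).trace * (P * Yᵀ * A * Y).trace := by
  obtain ⟨B, C, h⟩ := hP.exists_trace_mul_transpose_mul_mul_eq hA
  rw [h, h, h]
  exact sq_trace_transpose_mul_le_s3 _ _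

lemma IsSymm.trace_mul_mul_transpose_mul [Fintype m] [Fintype n] {R : Type*} [CommRing R]
    {S : Matrix m m R} (hS : S.IsSymm) (K : Matrix m n R) (P : Matrix n n R) (A : Matrix m m R) :
    (S * K * P * Kᵀ * S * A).trace = (P * (S * K)ᵀ * A * (S * K)).trace := by
  rw [transpose_mul, hS.eq]
  calc (S * K * P * Kᵀ * S * A).trace = (S * K * (P * Kᵀ * S * A)).trace := by
        simp only [Matrix.mul_assoc]
    _ = _ := trace_mul_comm _ _
    _ = _ := by simp only [Matrix.mul_assoc]

lemma trace_mul_sum_smul_mul [Fintype m] [Fintype n] [Fintype ι] (L : Matrix n m ℝ)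
    (R : Matrix m n ℝ) (v : ι → ℝ) (A : ι → Matrix m m ℝ) :
    (L * (∑ i, v i • A i) * R).trace = ∑ i, v i * (L * A i * R).trace := by
  simp only [Matrix.mul_sum, Matrix.sum_mul, trace_sum, Matrix.mul_smul, Matrix.smul_mul,
    trace_smul, smul_eq_mul]

lemma PosDef.transpose_inv_mul_mul_mul_inv_mul [Fintype m] [DecidableEq m] {N : Matrix m m ℝ}
    (hN : N.PosDef) (N' : Matrix m m ℝ) (K : Matrix m n ℝ) :
    (N⁻¹ * K)ᵀ * N * (N'⁻¹ * K) = Kᵀ * N'⁻¹ * K := by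
  rw [transpose_mul, (isHermitian_iff_isSymm.mp hN.inv.isHermitian).eq, Matrix.mul_assoc Kᵀ,
    nonsing_inv_mul _ hN.det_pos.ne'.isUnit, Matrix.mul_one, Matrix.mul_assoc]

lemma PosSemidef.det_le_exp_trace_sub_card [Fintype n] [DecidableEq n] {A : Matrix n n ℝ}
    (hA : A.PosSemidef) : A.det ≤ Real.exp (A.trace - Fintype.card n) := by
  rw [hA.isHermitian.det_eq_prod_eigenvalues, hA.isHermitian.trace_eq_sum_eigenvalues,
    Fintype.card_eq_sum_ones, Nat.cast_sum, ← sum_sub_distrib, Real.exp_sum]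
  refine prod_le_prod (fun i _ => hA.eigenvalues_nonneg i) fun i _ => ?_
  simpa using Real.add_one_le_exp (hA.isHermitian.eigenvalues i - 1)

lemma PosDef.det_le_of_trace_inv_mul_le_card [Fintype n] [DecidableEq n] {G G' : Matrix n n ℝ}
    (hG : G.PosDef) (hG' : G'.PosSemidef) (htr : (G⁻¹ * G').trace ≤ Fintype.card n) :
    G'.det ≤ G.det := by
  obtain ⟨B, hB⟩ := CStarAlgebra.nonneg_iff_eq_star_mul_self.mp hG.inv.posSemidef.nonneg
  have htr' : (B * G' * Bᴴ).trace = (G⁻¹ * G').trace := by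
    rw [hB, star_eq_conjTranspose, trace_mul_comm, Matrix.mul_assoc]
  have hdet : (B * G' * Bᴴ).det = G⁻¹.det * G'.det := by
    rw [hB, star_eq_conjTranspose, det_mul, det_mul, det_mul]; ring
  have hle : G⁻¹.det * G'.det ≤ 1 := by
    rw [← hdet]
    calc (B * G' * Bᴴ).det ≤ Real.exp ((B * G' * Bᴴ).trace - Fintype.card n) :=
          (hG'.mul_mul_conjTranspose_same B).det_le_exp_trace_sub_card
      _ ≤ 1 := Real.exp_le_one_iff.2 (by rw [htr']; linarith)
  calc G'.det = G.det * (G⁻¹.det * G'.det) := by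
        rw [← mul_assoc, ← det_mul, mul_nonsing_inv _ hG.det_pos.ne'.isUnit, det_one, one_mul]
    _ ≤ G.det := mul_le_of_le_one_right hG.det_pos.le hle

lemma mulVec_injective_of_rank_eq [Fintype n] {R : Type*} [Field R] {K : Matrix m n R}
    (hK : K.rank = Fintype.card n) : Function.Injective K.mulVec := by
  have h := LinearMap.finrank_range_add_finrank_ker K.mulVecLin
  rw [← Matrix.rank, hK, Module.finrank_fintype_fun_eq_card] at h
  have hker : LinearMap.ker K.mulVecLin = ⊥ := Submodule.finrank_eq_zero.mp (by omega)
  exact LinearMap.ker_eq_bot.mp hker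

end Matrix

theorem stmt_3_general {n m r : ℕ} (hr : 0 < r)
    (A : Fin n → Matrix (Fin m) (Fin m) ℝ) (hA : ∀ i, (A i).PosSemidef)
    (M : (Fin n → ℝ) → Matrix (Fin m) (Fin m) ℝ)
    (hM : ∀ v : Fin n → ℝ, M v = ∑ i, v i • A i)
    (K : Matrix (Fin m) (Fin r) ℝ) (hK : K.rank = r)
    (w : Fin n → ℝ) (hw : ∀ i, 0 < w i) (hw1 : ∑ i, w i = 1)
    (lam : ℝ) (hlam0 : 0 < lam) (hlam1 : lam ≤ 1)
    (d : Fin n → ℝ)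
    (hd : ∀ i, d i =
      ((M w)⁻¹ * K * (Kᵀ * (M w)⁻¹ * K)⁻¹ * Kᵀ * (M w)⁻¹ * A i).trace)
    (w' : Fin n → ℝ)
    (hw' : ∀ i, w' i = w i * d i ^ lam / ∑ j, w j * d j ^ lam)
    (hMwpos : (M w).PosDef) (hMw'pos : (M w').PosDef) :
    (Kᵀ * (M w')⁻¹ * K).det ≤ (Kᵀ * (M w)⁻¹ * K).det := by
  have hKinj : Function.Injective K.mulVec :=
    mulVec_injective_of_rank_eq (hK.trans (Fintype.card_fin r).symm)
  have hG : (Kᵀ * (M w)⁻¹ * K).PosDef := by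
    simpa using hMwpos.inv.conjTranspose_mul_mul_same hKinj
  have hG' : (Kᵀ * (M w')⁻¹ * K).PosDef := by
    simpa using hMw'pos.inv.conjTranspose_mul_mul_same hKinj
  refine hG.det_le_of_trace_inv_mul_le_card hG'.posSemidef ?_
  set P := (Kᵀ * (M w)⁻¹ * K)⁻¹
  have hP : P.PosSemidef := hG.inv.posSemidef
  have hd' : ∀ i, d i = (P * ((M w)⁻¹ * K)ᵀ * A i * ((M w)⁻¹ * K)).trace := fun i =>
    (hd i).trans <|
      (isHermitian_iff_isSymm.mp hMwpos.inv.isHermitian).trace_mul_mul_transpose_mul K P _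
  have hsum : ∀ v (N' : Matrix (Fin m) (Fin m) ℝ), (M v).PosDef →
      ∑ i, v i * (P * ((M v)⁻¹ * K)ᵀ * A i * (N'⁻¹ * K)).trace =
        (P * (Kᵀ * N'⁻¹ * K)).trace := fun v N' hv => by
    rw [← trace_mul_sum_smul_mul, ← hM, ← hv.transpose_inv_mul_mul_mul_inv_mul N' K]
    simp only [Matrix.mul_assoc]
  have hwd : ∑ i, w i * d i = r := by
    simp only [hd', hsum w _ hMwpos, P, nonsing_inv_mul _ hG.det_pos.ne'.isUnit, trace_one,
      Fintype.card_fin]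
  have hbound := two_mul_sum_sub_sum_rpow_div_le (d := d) (fun i => (hw i).le) hw1
    (fun i => by rw [hd']; exact hP.trace_mul_transpose_mul_mul_self_nonneg (hA i) _)
    (fun i => hP.trace_mul_transpose_mul_mul_self_nonneg (hA i) ((M w')⁻¹ * K))
    (fun i => by rw [hd']; exact hP.sq_trace_mul_transpose_mul_mul_le (hA i) _ _)
    hlam0.le hlam1 (by rw [hwd]; exact_mod_cast hr)
  simp only [← hw', hsum w _ hMwpos, hsum w' _ hMw'pos, hwd] at hbound
  rw [Fintype.card_fin]
  linarith

/-- Monotonicity of the multiplicative algorithm for the D-criterion for `Kᵀθ`,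
`φ_{0,K}(M) = -log det(Kᵀ M⁻¹ K)`, for every power `lam ∈ (0,1]`. -/
theorem stmt_3 {n m r : ℕ} (hn : 0 < n) (hm : 0 < m) (hr : 0 < r) (hrm : r ≤ m)
    (A : Fin n → Matrix (Fin m) (Fin m) ℝ) (hA : ∀ i, (A i).PosSemidef)
    (M : (Fin n → ℝ) → Matrix (Fin m) (Fin m) ℝ)
    (hM : ∀ v : Fin n → ℝ, M v = ∑ i, v i • A i)
    (K : Matrix (Fin m) (Fin r) ℝ) (hK : K.rank = r)
    (w : Fin n → ℝ) (hw : ∀ i, 0 < w i) (hw1 : ∑ i, w i = 1)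
    (lam : ℝ) (hlam0 : 0 < lam) (hlam1 : lam ≤ 1)
    (d : Fin n → ℝ)
    (hd : ∀ i, d i =
      ((M w)⁻¹ * K * (Kᵀ * (M w)⁻¹ * K)⁻¹ * Kᵀ * (M w)⁻¹ * A i).trace)
    (w' : Fin n → ℝ)
    (hw' : ∀ i, w' i = w i * d i ^ lam / ∑ j, w j * d j ^ lam)
    (hMwpos : (M w).PosDef) (hMw'pos : (M w').PosDef) :
    (Kᵀ * (M w')⁻¹ * K).det ≤ (Kᵀ * (M w)⁻¹ * K).det :=
  stmt_3_general hr A hA M hM K hK w hw hw1 lam hlam0 hlam1 d hd w' hw' hMwpos hMw'pos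
end

section
/- Let m ≥ 2, let z_1, …, z_n ∈ ℝ^{m-1}, and set x_i = (1, z_iᵀ)ᵀ ∈ ℝ^m and A_i = x_i x_iᵀ. Let w be a probability vector with w_i > 0 for all i, put z̄ = Σ_i w_i z_i and M_c(w) = Σ_i w_i (z_i - z̄)(z_i - z̄)ᵀ, and suppose M(w) is positive definite. Define w'_i = w_i · (z_i - z̄)ᵀ M_c(w)^{-1} (z_i - z̄) / (m - 1). Then w' is a probability vector and det M(w') ≥ det M(w). (Titterington's conjecture: monotonicity of the iteration (alg2) for D-optimality of the non-intercept coefficients in a linear model.) -/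
/-!
Write `yᵢ = zᵢ - z̄`. A shear that clears the first row and column of `M(v)` shows that `det M(v)`
is the determinant of the covariance matrix of the `zᵢ` under the weights `v`, so the claim
becomes `det M_c ≤ det C'` with `C' = ∑ w'ᵢ (yᵢ - b)(yᵢ - b)ᵀ`, `b` the `w'`-mean of the `yᵢ`.
Put `dᵢ = yᵢᵀ M_c⁻¹ yᵢ` and `gᵢ = (k / dᵢ) M_c⁻¹ yᵢ`, so that `w'ᵢ gᵢ = wᵢ M_c⁻¹ yᵢ`. As the `yᵢ`
are `w`-centred, `∑ w'ᵢ (yᵢ - b) gᵢᵀ = 1` for every `b`, and the matrix Cauchy–Schwarz inequality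
gives `G⁻¹ ≤ C'` for `G = ∑ w'ᵢ gᵢ gᵢᵀ`. On the other hand `tr (G M_c) = ∑ wᵢ (k / dᵢ) dᵢ ≤ k`,
so AM-GM on eigenvalues gives `det G · det M_c ≤ 1`. Hence `det M_c ≤ det G⁻¹ ≤ det C'`.
-/

open Matrix
open scoped MatrixOrder

theorem Real.prod_le_sum_div_card_pow {ι : Type*} [Fintype ι] {z : ι → ℝ} (hz : ∀ i, 0 ≤ z i) :
    ∏ i, z i ≤ ((∑ i, z i) / Fintype.card ι) ^ Fintype.card ι := by
  rcases isEmpty_or_nonempty ι with _ | _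
  · simp
  have hcard : Fintype.card ι ≠ 0 := Fintype.card_ne_zero
  have amgm := Real.geom_mean_le_arith_mean Finset.univ (fun _ => 1) z (fun _ _ => zero_le_one)
    (by simp [Fintype.card_pos]) (fun i _ => hz i)
  simp only [Real.rpow_one, Finset.sum_const, Finset.card_univ, nsmul_eq_mul, mul_one, one_mul]
    at amgm
  calc ∏ i, z i = ((∏ i, z i) ^ ((Fintype.card ι : ℝ)⁻¹)) ^ Fintype.card ι :=
        (Real.rpow_inv_natCast_pow (Finset.prod_nonneg fun i _ => hz i) hcard).symm
    _ ≤ ((∑ i, z i) / Fintype.card ι) ^ Fintype.card ι :=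
        pow_le_pow_left₀ (Real.rpow_nonneg (Finset.prod_nonneg fun i _ => hz i) _) amgm _

namespace Matrix

variable {m : Type*} [Fintype m] [DecidableEq m]

theorem PosSemidef.det_le_trace_div_pow {A : Matrix m m ℝ} (hA : A.PosSemidef) :
    A.det ≤ (A.trace / Fintype.card m) ^ Fintype.card m := by
  rw [hA.isHermitian.det_eq_prod_eigenvalues, hA.isHermitian.trace_eq_sum_eigenvalues]
  exact_mod_cast Real.prod_le_sum_div_card_pow hA.eigenvalues_nonneg

theorem PosSemidef.det_sqrt_mul_mul_sqrt {A : Matrix m m ℝ} (hA : A.PosSemidef) (B : Matrix m m ℝ) :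
    (CFC.sqrt A * B * CFC.sqrt A).det = A.det * B.det := by
  rw [det_mul, det_mul, mul_right_comm, ← det_mul, CFC.sqrt_mul_sqrt_self A hA.nonneg]

theorem PosSemidef.trace_sqrt_mul_mul_sqrt {A : Matrix m m ℝ} (hA : A.PosSemidef)
    (B : Matrix m m ℝ) :
    (CFC.sqrt A * B * CFC.sqrt A).trace = (A * B).trace := by
  rw [trace_mul_cycle, CFC.sqrt_mul_sqrt_self A hA.nonneg]

theorem PosSemidef.sqrt_mul_mul_sqrt {B : Matrix m m ℝ} (hB : B.PosSemidef) (A : Matrix m m ℝ) :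
    (CFC.sqrt A * B * CFC.sqrt A).PosSemidef := by
  have := hB.mul_mul_conjTranspose_same (CFC.sqrt A)
  rwa [(CFC.sqrt_nonneg A).posSemidef.isHermitian.eq] at this

theorem PosSemidef.trace_mul_nonneg {A B : Matrix m m ℝ} (hA : A.PosSemidef) (hB : B.PosSemidef) :
    0 ≤ (A * B).trace :=
  hA.trace_sqrt_mul_mul_sqrt B ▸ (hB.sqrt_mul_mul_sqrt A).trace_nonneg

theorem PosSemidef.det_mul_det_le {A B : Matrix m m ℝ} (hA : A.PosSemidef) (hB : B.PosSemidef) :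
    A.det * B.det ≤ ((A * B).trace / Fintype.card m) ^ Fintype.card m := by
  rw [← hA.det_sqrt_mul_mul_sqrt, ← hA.trace_sqrt_mul_mul_sqrt]
  exact (hB.sqrt_mul_mul_sqrt A).det_le_trace_div_pow

theorem PosDef.det_le_det_of_le {A B : Matrix m m ℝ} (hA : A.PosDef) (hAB : A ≤ B) :
    A.det ≤ B.det := by
  have hB : B.PosDef := by simpa using hA.add_posSemidef hAB
  -- AM-GM for `A * B⁻¹`, whose trace is at most `card m` because `tr ((B - A) * B⁻¹) ≥ 0`.
  have htrace : (A * B⁻¹).trace ≤ Fintype.card m := by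
    have := hAB.trace_mul_nonneg hB.inv.posSemidef
    rw [sub_mul, mul_nonsing_inv _ hB.det_pos.ne'.isUnit, trace_sub, trace_one] at this
    linarith
  have hle : A.det * (B.det)⁻¹ ≤ 1 := by
    rw [← Ring.inverse_eq_inv', ← det_nonsing_inv]
    refine (hA.posSemidef.det_mul_det_le hB.inv.posSemidef).trans (pow_le_one₀ ?_ ?_)
    · exact div_nonneg (hA.posSemidef.trace_mul_nonneg hB.inv.posSemidef) (Nat.cast_nonneg _)
    · exact div_le_one_of_le₀ htrace (Nat.cast_nonneg _)
  rwa [mul_inv_le_iff₀ hB.det_pos, one_mul] at hle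

end Matrix

section CrossMoment

variable {ι m : Type*} [Fintype ι]

noncomputable def crossMoment (p : ι → ℝ) (a c : ι → m → ℝ) : Matrix m m ℝ :=
  ∑ i, p i • vecMulVec (a i) (c i)

variable (p : ι → ℝ) (a a' c c' : ι → m → ℝ)

theorem crossMoment_transpose : (crossMoment p a c)ᵀ = crossMoment p c a := by
  simp [crossMoment, transpose_sum, transpose_vecMulVec]

theorem crossMoment_sub_left :
    crossMoment p (fun i => a i - a' i) c = crossMoment p a c - crossMoment p a' c := by
  simp [crossMoment, sub_vecMulVec, smul_sub, Finset.sum_sub_distrib]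

theorem crossMoment_sub_right :
    crossMoment p a (fun i => c i - c' i) = crossMoment p a c - crossMoment p a c' := by
  simp [crossMoment, vecMulVec_sub, smul_sub, Finset.sum_sub_distrib]

theorem crossMoment_const_left (b : m → ℝ) :
    crossMoment p (fun _ => b) c = vecMulVec b (∑ i, p i • c i) := by
  ext j l
  simp [crossMoment, vecMulVec_apply, Matrix.sum_apply, Finset.mul_sum, mul_left_comm]

theorem crossMoment_congr_right (q : ι → ℝ) (h : ∀ i, p i • c i = q i • c' i) :
    crossMoment p a c = crossMoment q a c' := by
  simp only [crossMoment, ← vecMulVec_smul, h]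

variable [Fintype m]

theorem crossMoment_mulVec_left (N : Matrix m m ℝ) :
    crossMoment p (fun i => N *ᵥ a i) c = N * crossMoment p a c := by
  simp [crossMoment, Finset.mul_sum, mul_vecMulVec]

theorem crossMoment_mulVec_right (N : Matrix m m ℝ) :
    crossMoment p a (fun i => N *ᵥ c i) = crossMoment p a c * Nᵀ := by
  simp [crossMoment, Finset.sum_mul, vecMulVec_mul, vecMul_transpose]

theorem trace_crossMoment : (crossMoment p a c).trace = ∑ i, p i * (a i ⬝ᵥ c i) := by
  simp [crossMoment, trace_sum]

theorem crossMoment_mulVec (x : m → ℝ) :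
    crossMoment p a c *ᵥ x = ∑ i, (p i * (c i ⬝ᵥ x)) • a i := by
  simp only [crossMoment, sum_mulVec, smul_mulVec, vecMulVec_mulVec, op_smul_eq_smul, smul_smul]

theorem dotProduct_crossMoment_self_mulVec (x : m → ℝ) :
    x ⬝ᵥ crossMoment p c c *ᵥ x = ∑ i, p i * (c i ⬝ᵥ x) ^ 2 := by
  rw [crossMoment_mulVec, dotProduct_sum]
  refine Finset.sum_congr rfl fun i _ => ?_
  rw [dotProduct_smul, smul_eq_mul, dotProduct_comm, sq, mul_assoc]

theorem posSemidef_crossMoment_self (hp : 0 ≤ p) : (crossMoment p c c).PosSemidef :=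
  posSemidef_sum _ fun i _ => by simpa using (posSemidef_vecMulVec_self_star (c i)).smul (hp i)

end CrossMoment

section CauchySchwarz

variable {ι m : Type*} [Fintype ι] [Fintype m] [DecidableEq m] {p : ι → ℝ} {a c : ι → m → ℝ}

theorem posDef_crossMoment_of_crossMoment_eq_one (hp : 0 ≤ p) (h : crossMoment p a c = 1) :
    (crossMoment p c c).PosDef := by
  have hpsd := posSemidef_crossMoment_self p c hp
  refine PosDef.of_dotProduct_mulVec_pos hpsd.isHermitian fun x hx => ?_
  have hnonneg := hpsd.dotProduct_mulVec_nonneg x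
  rw [star_trivial] at hnonneg ⊢
  refine hnonneg.lt_of_ne' fun h0 => hx ?_
  rw [dotProduct_crossMoment_self_mulVec] at h0
  have hterm : ∀ i, p i * (c i ⬝ᵥ x) = 0 := by
    intro i
    have hi := (Finset.sum_eq_zero_iff_of_nonneg fun i _ => mul_nonneg (hp i) (sq_nonneg _)).mp
      h0 i (Finset.mem_univ _)
    rcases mul_eq_zero.mp hi with hpi | hci
    · rw [hpi, zero_mul]
    · rw [pow_eq_zero_iff two_ne_zero |>.mp hci, mul_zero]
  calc x = crossMoment p a c *ᵥ x := by rw [h, one_mulVec]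
    _ = 0 := by simp [crossMoment_mulVec, hterm]

theorem inv_crossMoment_le_crossMoment_of_crossMoment_eq_one (hp : 0 ≤ p)
    (h : crossMoment p a c = 1) : (crossMoment p c c)⁻¹ ≤ crossMoment p a a := by
  set G := crossMoment p c c
  have hGG : G⁻¹ * G = 1 :=
    nonsing_inv_mul _ (posDef_crossMoment_of_crossMoment_eq_one hp h).det_pos.ne'.isUnit
  have hGT : G⁻¹ᵀ = G⁻¹ := by rw [transpose_nonsing_inv, crossMoment_transpose]
  have hca : crossMoment p c a = 1 := by rw [← crossMoment_transpose, h, transpose_one]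
  have hexpand : crossMoment p a a - G⁻¹ =
      crossMoment p (fun i => a i - G⁻¹ *ᵥ c i) (fun i => a i - G⁻¹ *ᵥ c i) := by
    rw [crossMoment_sub_left, crossMoment_sub_right, crossMoment_sub_right, crossMoment_mulVec_left,
      crossMoment_mulVec_left, crossMoment_mulVec_right, crossMoment_mulVec_right, h, hca, hGT,
      ← Matrix.mul_assoc, hGG]
    simp only [one_mul, mul_one, sub_self, sub_zero]
  rw [le_iff, hexpand]
  exact posSemidef_crossMoment_self _ _ hp

end CauchySchwarz

section MomentMatrix

variable {ι : Type*} [Fintype ι] {k : ℕ} (v : ι → ℝ)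

theorem crossMoment_apply {m : Type*} (a c : ι → m → ℝ) (j l : m) :
    crossMoment v a c j l = ∑ i, v i * (a i j * c i l) := by
  simp [crossMoment, Matrix.sum_apply, vecMulVec_apply]

theorem det_crossMoment_cons_one_sub (z : ι → Fin k → ℝ) (c : Fin k → ℝ) :
    (crossMoment v (fun i => Fin.cons 1 (z i - c)) (fun i => Fin.cons 1 (z i - c))).det =
      (crossMoment v (fun i => Fin.cons 1 (z i)) (fun i => Fin.cons 1 (z i))).det := by
  set E : Matrix (Fin (k + 1)) (Fin (k + 1)) ℝ :=
    1 + vecMulVec (-Fin.cons 0 c) (Pi.single 0 1)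
  have hE : ∀ u : Fin k → ℝ, E *ᵥ Fin.cons 1 u = Fin.cons 1 (u - c) := by
    intro u
    ext j
    refine Fin.cases ?_ (fun j => ?_) j <;>
      simp [E, add_mulVec, neg_mulVec, vecMulVec_mulVec, single_dotProduct, sub_eq_add_neg]
  have hdetE : E.det = 1 := by
    simp [E, vecMulVec_eq Unit, det_one_add_replicateCol_mul_replicateRow]
  have hshear : (fun i => Fin.cons 1 (z i - c)) = fun i => E *ᵥ Fin.cons 1 (z i) :=
    funext fun i => (hE (z i)).symm
  rw [hshear, crossMoment_mulVec_left, crossMoment_mulVec_right, det_mul, det_mul,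
    det_transpose, hdetE, one_mul, mul_one]

theorem det_crossMoment_cons_one_of_sum_smul_eq_zero (hv : ∑ i, v i = 1) (y : ι → Fin k → ℝ)
    (hy : ∑ i, v i • y i = 0) :
    (crossMoment v (fun i => Fin.cons 1 (y i)) (fun i => Fin.cons 1 (y i))).det =
      (crossMoment v y y).det := by
  have hcol : ∀ j : Fin k, ∑ i, v i * y i j = 0 := fun j => by
    simpa using congrFun hy j
  rw [det_succ_column_zero, Fin.sum_univ_succ]
  simp only [Nat.succ_eq_add_one, Fin.coe_ofNat_eq_mod, Nat.zero_mod, pow_zero, crossMoment_apply,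
    Fin.cons_zero, mul_one, hv, Fin.succAbove_zero, one_mul, Fin.val_succ, Fin.cons_succ, hcol,
    mul_zero, zero_mul, Finset.sum_const_zero, add_zero]
  congr 1
  ext j l
  simp [crossMoment_apply]

theorem det_crossMoment_cons_one (hv : ∑ i, v i = 1) (z : ι → Fin k → ℝ) :
    (crossMoment v (fun i => Fin.cons 1 (z i)) (fun i => Fin.cons 1 (z i))).det =
      (crossMoment v (fun i => z i - ∑ j, v j • z j) (fun i => z i - ∑ j, v j • z j)).det := by
  rw [← det_crossMoment_cons_one_sub v z (∑ j, v j • z j)]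
  refine det_crossMoment_cons_one_of_sum_smul_eq_zero v hv _ ?_
  simp [smul_sub, Finset.sum_sub_distrib, ← Finset.sum_smul, hv]

end MomentMatrix

section Titterington

variable {ι m : Type*} [Fintype ι] [Fintype m] [DecidableEq m] (w : ι → ℝ) (y : ι → m → ℝ)

noncomputable def titteringtonUpdate (i : ι) : ℝ :=
  w i * (y i ⬝ᵥ (crossMoment w y y)⁻¹ *ᵥ y i) / Fintype.card m

theorem titteringtonUpdate_nonneg (hw : 0 ≤ w) : 0 ≤ titteringtonUpdate w y := fun i => by
  have hinv := (posSemidef_crossMoment_self w y hw).inv.dotProduct_mulVec_nonneg (y i)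
  rw [star_trivial] at hinv
  exact div_nonneg (mul_nonneg (hw i) hinv) (Nat.cast_nonneg _)

theorem crossMoment_inv_mulVec_right (hM : IsUnit (crossMoment w y y)) :
    crossMoment w y (fun i => (crossMoment w y y)⁻¹ *ᵥ y i) = 1 := by
  rw [crossMoment_mulVec_right, transpose_nonsing_inv, crossMoment_transpose,
    mul_nonsing_inv _ ((isUnit_iff_isUnit_det _).mp hM)]

theorem sum_titteringtonUpdate [Nonempty m] (hM : IsUnit (crossMoment w y y)) :
    ∑ i, titteringtonUpdate w y i = 1 := by
  have htrace := congrArg trace (crossMoment_inv_mulVec_right w y hM)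
  rw [trace_crossMoment, trace_one] at htrace
  simp only [titteringtonUpdate]
  rw [← Finset.sum_div, htrace]
  exact div_self (Nat.cast_ne_zero.mpr Fintype.card_ne_zero)

theorem det_crossMoment_le_det_crossMoment_titteringtonUpdate [Nonempty m] (hw : 0 ≤ w)
    (hw1 : ∑ i, w i = 1) (hy : ∑ i, w i • y i = 0) (hM : (crossMoment w y y).PosDef) (b : m → ℝ) :
    (crossMoment w y y).det ≤
      (crossMoment (titteringtonUpdate w y) (fun i => y i - b) (fun i => y i - b)).det := by
  set Mc := crossMoment w y y
  set w' := titteringtonUpdate w y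
  set k : ℝ := (Fintype.card m : ℝ)
  set d : ι → ℝ := fun i => y i ⬝ᵥ Mc⁻¹ *ᵥ y i
  set g : ι → m → ℝ := fun i => (k / d i) • Mc⁻¹ *ᵥ y i
  have hk : 0 < k := Nat.cast_pos.mpr Fintype.card_pos
  have hy_of_d : ∀ i, d i = 0 → y i = 0 := fun i hd => by
    by_contra hyi
    have := hM.inv.dotProduct_mulVec_pos hyi
    rw [star_trivial] at this
    exact this.ne' hd
  have hw'g : ∀ i, w' i • g i = w i • Mc⁻¹ *ᵥ y i := by
    intro i
    by_cases hd : d i = 0  -- then `y i = 0`, and `g i = 0` as `k / 0 = 0`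
    · simp [g, hy_of_d i hd]
    · change (w i * d i / k) • (k / d i) • Mc⁻¹ *ᵥ y i = _
      rw [smul_smul]
      congr 1
      field_simp
  have hC : crossMoment w' (fun i => y i - b) g = 1 := by
    rw [crossMoment_congr_right _ _ _ _ w hw'g, crossMoment_sub_left,
      crossMoment_inv_mulVec_right w y hM.isUnit, crossMoment_const_left]
    simp [← mulVec_smul, ← mulVec_sum, hy]
  have hgy : ∀ i, g i ⬝ᵥ y i ≤ k := by
    intro i
    by_cases hd : d i = 0
    · simp [g, hy_of_d i hd, hk.le]
    · change ((k / d i) • Mc⁻¹ *ᵥ y i) ⬝ᵥ y i ≤ k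
      rw [smul_dotProduct, smul_eq_mul, dotProduct_comm, div_mul_cancel₀ _ hd]
  have htrace : (crossMoment w' g g * Mc).trace ≤ k := by
    rw [crossMoment_congr_right _ _ _ _ w hw'g, crossMoment_mulVec_right, transpose_nonsing_inv,
      crossMoment_transpose, Matrix.mul_assoc, nonsing_inv_mul _ hM.det_pos.ne'.isUnit, mul_one,
      trace_crossMoment]
    calc ∑ i, w i * (g i ⬝ᵥ y i) ≤ ∑ i, w i * k :=
          Finset.sum_le_sum fun i _ => mul_le_mul_of_nonneg_left (hgy i) (hw i)
      _ = k := by rw [← Finset.sum_mul, hw1, one_mul]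
  have hG := posDef_crossMoment_of_crossMoment_eq_one (titteringtonUpdate_nonneg w y hw) hC
  have hdet : (crossMoment w' g g).det * Mc.det ≤ 1 := by
    refine (hG.posSemidef.det_mul_det_le hM.posSemidef).trans (pow_le_one₀ ?_ ?_)
    · exact div_nonneg (hG.posSemidef.trace_mul_nonneg hM.posSemidef) hk.le
    · exact div_le_one_of_le₀ htrace hk.le
  calc Mc.det ≤ (crossMoment w' g g)⁻¹.det := by
        rw [det_nonsing_inv, Ring.inverse_eq_inv', inv_eq_one_div, le_div_iff₀ hG.det_pos, mul_comm]
        exact hdet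
    _ ≤ _ := hG.inv.det_le_det_of_le
        (inv_crossMoment_le_crossMoment_of_crossMoment_eq_one (titteringtonUpdate_nonneg w y hw) hC)

end Titterington

theorem stmt_6_general {n k : ℕ} (hk : 1 ≤ k)
    (z : Fin n → Fin k → ℝ)
    (x : Fin n → Fin (k + 1) → ℝ) (hx : ∀ i, x i = Fin.cons 1 (z i))
    (A : Fin n → Matrix (Fin (k + 1)) (Fin (k + 1)) ℝ)
    (hA : ∀ i, A i = vecMulVec (x i) (x i))
    (M : (Fin n → ℝ) → Matrix (Fin (k + 1)) (Fin (k + 1)) ℝ)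
    (hM : ∀ v : Fin n → ℝ, M v = ∑ i, v i • A i)
    (w : Fin n → ℝ) (hw : ∀ i, 0 < w i) (hw1 : ∑ i, w i = 1)
    (zbar : Fin k → ℝ) (hzbar : zbar = ∑ i, w i • z i)
    (Mc : Matrix (Fin k) (Fin k) ℝ)
    (hMc : Mc = ∑ i, w i • vecMulVec (z i - zbar) (z i - zbar))
    (hMwpos : (M w).PosDef)
    (w' : Fin n → ℝ)
    (hw' : ∀ i, w' i = w i * ((z i - zbar) ⬝ᵥ Mc⁻¹ *ᵥ (z i - zbar)) / k) :
    (∀ i, 0 ≤ w' i) ∧ (∑ i, w' i = 1) ∧ (M w).det ≤ (M w').det := by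
  have : Nonempty (Fin k) := ⟨⟨0, hk⟩⟩
  have hw0 : 0 ≤ w := fun i => (hw i).le
  set y : Fin n → Fin k → ℝ := fun i => z i - zbar
  have hMc' : Mc = crossMoment w y y := hMc
  have hMx : ∀ v, M v = crossMoment v (fun i => Fin.cons 1 (z i)) (fun i => Fin.cons 1 (z i)) :=
    fun v => by simp only [hM, hA, hx, crossMoment]
  have hdet : (M w).det = Mc.det := by rw [hMx, det_crossMoment_cons_one w hw1, ← hzbar, hMc']
  have hMcpd : (crossMoment w y y).PosDef :=
    (posSemidef_crossMoment_self w y hw0).posDef_iff_det_ne_zero.mpr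
      (hMc' ▸ hdet ▸ hMwpos.det_pos.ne')
  have hw'eq : w' = titteringtonUpdate w y :=
    funext fun i => by rw [hw' i, titteringtonUpdate, hMc', Fintype.card_fin]
  have hw'1 : ∑ i, w' i = 1 := hw'eq ▸ sum_titteringtonUpdate w y hMcpd.isUnit
  refine ⟨hw'eq ▸ titteringtonUpdate_nonneg w y hw0, hw'1, ?_⟩
  have hy : ∑ i, w i • y i = 0 := by
    simp [y, smul_sub, Finset.sum_sub_distrib, ← Finset.sum_smul, hw1, hzbar]
  have hstep := det_crossMoment_le_det_crossMoment_titteringtonUpdate w y hw0 hw1 hy hMcpd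
    (∑ j, w' j • z j - zbar)
  rw [hdet, hMx, det_crossMoment_cons_one w' hw'1, hMc']
  simpa only [y, sub_sub_sub_cancel_right, ← hw'eq] using hstep

/-- Titterington's conjecture: monotonicity of the iteration (alg2) for
D-optimality of the non-intercept coefficients in a linear model.
Here the dimension is `m = k + 1 ≥ 2`, the design points are
`x i = (1, z iᵀ)ᵀ` and `A i = x i (x i)ᵀ`. -/
theorem stmt_6 {n k : ℕ} (hn : 0 < n) (hk : 1 ≤ k)
    (z : Fin n → Fin k → ℝ)
    (x : Fin n → Fin (k + 1) → ℝ) (hx : ∀ i, x i = Fin.cons 1 (z i))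
    (A : Fin n → Matrix (Fin (k + 1)) (Fin (k + 1)) ℝ)
    (hA : ∀ i, A i = vecMulVec (x i) (x i))
    (M : (Fin n → ℝ) → Matrix (Fin (k + 1)) (Fin (k + 1)) ℝ)
    (hM : ∀ v : Fin n → ℝ, M v = ∑ i, v i • A i)
    (w : Fin n → ℝ) (hw : ∀ i, 0 < w i) (hw1 : ∑ i, w i = 1)
    (zbar : Fin k → ℝ) (hzbar : zbar = ∑ i, w i • z i)
    (Mc : Matrix (Fin k) (Fin k) ℝ)
    (hMc : Mc = ∑ i, w i • vecMulVec (z i - zbar) (z i - zbar))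
    (hMwpos : (M w).PosDef)
    (w' : Fin n → ℝ)
    (hw' : ∀ i, w' i = w i * ((z i - zbar) ⬝ᵥ Mc⁻¹ *ᵥ (z i - zbar)) / k) :
    (∀ i, 0 ≤ w' i) ∧ (∑ i, w' i = 1) ∧ (M w).det ≤ (M w').det :=
  stmt_6_general hk z x hx A hA M hM w hw hw1 zbar hzbar Mc hMc hMwpos w' hw'
end

section
/- Let w_1, …, w_n be positive reals with Σ_{i=1}^n w_i = 1, let r_1, …, r_n be nonnegative reals, and let λ ∈ (0,1]. Then (Σ_{i=1}^n r_i / w_i)^{1-λ} ≥ Σ_{i=1}^n w_i (r_i / w_i^2)^{1-λ} and (Σ_{i=1}^n r_i / w_i)^{λ} ≥ Σ_{i=1}^n w_i (r_i / w_i^2)^{λ}; consequently Σ_{i=1}^n r_i / w_i ≥ (Σ_{i=1}^n r_i^{1-λ} w_i^{2λ-1}) · (Σ_{i=1}^n r_i^{λ} w_i^{1-2λ}). (Jensen-inequality step in the proof of the general monotonicity theorem.) -/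
/-!
Both inequalities are Jensen's inequality for the concave map `x ↦ x ^ p` (`0 ≤ p ≤ 1`) at the
points `r i / w i ^ 2` with weights `w i`, since `∑ w i * (r i / w i ^ 2) = ∑ r i / w i`.
Since `w * (r / w ^ 2) ^ p = r ^ p * w ^ (1 - 2 * p)`, the product of the two Jensen sums for
`p = 1 - λ` and `p = λ` is the product in the third claim, and it is at most
`S ^ (1 - λ) * S ^ λ = S` with `S = ∑ r i / w i`.
-/

open Finset

lemma mul_div_sq_rpow_eq {w r : ℝ} (hw : 0 < w) (hr : 0 ≤ r) (p : ℝ) :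
    w * (r / w ^ 2) ^ p = r ^ p * w ^ (1 - 2 * p) := by
  rw [Real.div_rpow hr (by positivity), ← Real.rpow_natCast w 2, ← Real.rpow_mul hw.le,
    Real.rpow_sub hw, Real.rpow_one]
  field_simp
  ring_nf

lemma sum_mul_div_sq_rpow_le {ι : Type*} (s : Finset ι) (w r : ι → ℝ)
    (hw : ∀ i ∈ s, 0 < w i) (hw1 : ∑ i ∈ s, w i = 1) (hr : ∀ i ∈ s, 0 ≤ r i)
    {p : ℝ} (hp0 : 0 ≤ p) (hp1 : p ≤ 1) :
    ∑ i ∈ s, w i * (r i / w i ^ 2) ^ p ≤ (∑ i ∈ s, r i / w i) ^ p := by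
  have jensen := (Real.concaveOn_rpow hp0 hp1).le_map_sum (t := s) (w := w)
    (p := fun i => r i / w i ^ 2) (fun i hi => (hw i hi).le) hw1
    (fun i hi => Set.mem_Ici.mpr (div_nonneg (hr i hi) (sq_nonneg _)))
  have mean : ∑ i ∈ s, w i * (r i / w i ^ 2) = ∑ i ∈ s, r i / w i :=
    sum_congr rfl fun i hi => by
      have := (hw i hi).ne'
      field_simp
  simpa only [smul_eq_mul, mean] using jensen

/-- Jensen-inequality step in the proof of the general monotonicity theorem. -/
theorem stmt_7 {n : ℕ} (w r : Fin n → ℝ)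
    (hw : ∀ i, 0 < w i) (hw1 : ∑ i, w i = 1)
    (hr : ∀ i, 0 ≤ r i)
    (lam : ℝ) (hlam0 : 0 < lam) (hlam1 : lam ≤ 1) :
    (∑ i, w i * (r i / w i ^ 2) ^ (1 - lam) ≤ (∑ i, r i / w i) ^ (1 - lam)) ∧
    (∑ i, w i * (r i / w i ^ 2) ^ lam ≤ (∑ i, r i / w i) ^ lam) ∧
    ((∑ i, r i ^ (1 - lam) * w i ^ (2 * lam - 1)) *
        (∑ i, r i ^ lam * w i ^ (1 - 2 * lam)) ≤ ∑ i, r i / w i) := by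
  have h1 := sum_mul_div_sq_rpow_le univ w r (fun i _ => hw i) hw1 (fun i _ => hr i)
    (p := 1 - lam) (by linarith) (by linarith)
  have h2 := sum_mul_div_sq_rpow_le univ w r (fun i _ => hw i) hw1 (fun i _ => hr i)
    hlam0.le hlam1
  refine ⟨h1, h2, ?_⟩
  have hS : 0 ≤ ∑ i, r i / w i := sum_nonneg fun i _ => div_nonneg (hr i) (hw i).le
  have hB : 0 ≤ ∑ i, w i * (r i / w i ^ 2) ^ lam :=
    sum_nonneg fun i _ => mul_nonneg (hw i).le (by have := hr i; positivity)
  have exponent : 1 - 2 * (1 - lam) = 2 * lam - 1 := by ring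
  simp only [← mul_div_sq_rpow_eq (hw _) (hr _), ← exponent]
  calc (∑ i, w i * (r i / w i ^ 2) ^ (1 - lam)) * ∑ i, w i * (r i / w i ^ 2) ^ lam
      ≤ (∑ i, r i / w i) ^ (1 - lam) * (∑ i, r i / w i) ^ lam :=
        mul_le_mul h1 h2 hB (Real.rpow_nonneg hS _)
    _ = ∑ i, r i / w i := by rw [← Real.rpow_add' hS (by norm_num), sub_add_cancel, Real.rpow_one]
end

section
/- Let w_1, …, w_n be positive reals with Σ_{i=1}^n w_i = 1, let r_1, …, r_n be nonnegative reals not all zero, let λ ∈ (0,1], and define w'_i = r_i^λ w_i^{1-2λ} / Σ_{j=1}^n r_j^λ w_j^{1-2λ}. Then Σ_{i : w'_i > 0} r_i / w'_i ≤ Σ_{i=1}^n r_i / w_i. (The multiplicative update with power λ does not increase the objective Σ_i r_i / w_i.) -/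
open Finset Real

/-! Write `b i = r i / w i ^ 2`. Then `r i / w i = w i * b i`, the normaliser of the update
is `S = ∑ i, w i * b i ^ λ`, and on the support `r i / w' i = S * w i * b i ^ (1 - λ)`.
Concavity of `x ↦ x ^ t` for `t ∈ [0, 1]` (Jensen with the weights `w`) gives, with
`T = ∑ i, r i / w i`, both `S ≤ T ^ λ` and `∑ i, w i * b i ^ (1 - λ) ≤ T ^ (1 - λ)`,
whose product is `T`. -/

lemma sum_mul_rpow_le_rpow_sum_mul {ι : Type*} (s : Finset ι) {w b : ι → ℝ}
    (hw : ∀ i ∈ s, 0 ≤ w i) (hw1 : ∑ i ∈ s, w i = 1) (hb : ∀ i ∈ s, 0 ≤ b i)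
    {t : ℝ} (ht0 : 0 ≤ t) (ht1 : t ≤ 1) :
    ∑ i ∈ s, w i * b i ^ t ≤ (∑ i ∈ s, w i * b i) ^ t :=
  (concaveOn_rpow ht0 ht1).le_map_sum hw hw1 hb

lemma rpow_mul_rpow_one_sub_two_mul {r w : ℝ} (hr : 0 ≤ r) (hw : 0 < w) (t : ℝ) :
    r ^ t * w ^ (1 - 2 * t) = w * (r / w ^ 2) ^ t := by
  rw [div_rpow hr (by positivity), ← rpow_natCast, ← rpow_mul hw.le, rpow_sub hw, rpow_one]
  push_cast
  field_simp

lemma div_div_rpow_mul_rpow_one_sub_two_mul {r w : ℝ} (hr : 0 < r) (hw : 0 < w) (t S : ℝ) :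
    r / (r ^ t * w ^ (1 - 2 * t) / S) = S * (w * (r / w ^ 2) ^ (1 - t)) := by
  have hb : 0 < r / w ^ 2 := by positivity
  rw [rpow_mul_rpow_one_sub_two_mul hr.le hw, rpow_sub hb, rpow_one]
  field_simp

theorem stmt_8_general {n : ℕ} (w r : Fin n → ℝ)
    (hw : ∀ i, 0 < w i) (hw1 : ∑ i, w i = 1)
    (hr : ∀ i, 0 ≤ r i)
    (lam : ℝ) (hlam0 : 0 < lam) (hlam1 : lam ≤ 1)
    (w' : Fin n → ℝ)
    (hw' : ∀ i, w' i =
      r i ^ lam * w i ^ (1 - 2 * lam) / ∑ j, r j ^ lam * w j ^ (1 - 2 * lam)) :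
    ∑ i ∈ univ.filter (fun i => 0 < w' i), r i / w' i ≤ ∑ i, r i / w i := by
  set b : Fin n → ℝ := fun i => r i / w i ^ 2
  set S := ∑ j, r j ^ lam * w j ^ (1 - 2 * lam)
  set T := ∑ i, r i / w i
  have hb : ∀ i, 0 ≤ b i := fun i => div_nonneg (hr i) (sq_nonneg _)
  have hwb : ∀ i (t : ℝ), 0 ≤ w i * b i ^ t := fun i t =>
    mul_nonneg (hw i).le (rpow_nonneg (hb i) t)
  have hT_nonneg : 0 ≤ T := sum_nonneg fun i _ => div_nonneg (hr i) (hw i).le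
  have hT : T = ∑ i, w i * b i :=
    sum_congr rfl fun i _ => by simp only [b]; field_simp
  have hS : S = ∑ i, w i * b i ^ lam :=
    sum_congr rfl fun i _ => rpow_mul_rpow_one_sub_two_mul (hr i) (hw i) lam
  have jensen {t : ℝ} (ht0 : 0 ≤ t) (ht1 : t ≤ 1) : ∑ i, w i * b i ^ t ≤ T ^ t :=
    hT ▸ sum_mul_rpow_le_rpow_sum_mul univ (fun i _ => (hw i).le) hw1 (fun i _ => hb i) ht0 ht1
  have hterm : ∀ i ∈ univ.filter (fun i => 0 < w' i),
      r i / w' i = S * (w i * b i ^ (1 - lam)) := by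
    intro i hi
    have hri : 0 < r i := by
      refine (hr i).lt_of_ne fun h => ?_
      have hw'i := (mem_filter.mp hi).2
      rw [hw' i, ← h, zero_rpow hlam0.ne', zero_mul, zero_div] at hw'i
      exact hw'i.false
    rw [hw' i, div_div_rpow_mul_rpow_one_sub_two_mul hri (hw i)]
  calc ∑ i ∈ univ.filter (fun i => 0 < w' i), r i / w' i
      = S * ∑ i ∈ univ.filter (fun i => 0 < w' i), w i * b i ^ (1 - lam) := by
        rw [sum_congr rfl hterm, mul_sum]
    _ ≤ S * ∑ i, w i * b i ^ (1 - lam) :=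
        mul_le_mul_of_nonneg_left (sum_le_univ_sum_of_nonneg fun i => hwb i _)
          (hS ▸ sum_nonneg fun i _ => hwb i lam)
    _ ≤ T ^ lam * T ^ (1 - lam) :=
        mul_le_mul (hS ▸ jensen hlam0.le hlam1) (jensen (by linarith) (by linarith))
          (sum_nonneg fun i _ => hwb i _) (rpow_nonneg hT_nonneg _)
    _ = T := by
        rw [← rpow_add' hT_nonneg (by norm_num)]
        simp

/-- The multiplicative update with power `lam ∈ (0,1]` does not increase the
objective `∑ i, r i / w i`. -/
theorem stmt_8 {n : ℕ} (w r : Fin n → ℝ)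
    (hw : ∀ i, 0 < w i) (hw1 : ∑ i, w i = 1)
    (hr : ∀ i, 0 ≤ r i) (hrne : ∃ i, r i ≠ 0)
    (lam : ℝ) (hlam0 : 0 < lam) (hlam1 : lam ≤ 1)
    (w' : Fin n → ℝ)
    (hw' : ∀ i, w' i =
      r i ^ lam * w i ^ (1 - 2 * lam) / ∑ j, r j ^ lam * w j ^ (1 - 2 * lam)) :
    ∑ i ∈ univ.filter (fun i => 0 < w' i), r i / w' i ≤ ∑ i, r i / w i :=
  stmt_8_general w r hw hw1 hr lam hlam0 hlam1 w' hw'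
end

section
/- Assume λ ∈ (0,1) (strictly), and let w be a probability vector with all coordinates positive such that M(w) is positive definite, D(M(w)^{-1}) is positive semidefinite and D(M(w)^{-1}) A_i ≠ 0 for all i, and M(Tw) is positive definite, where T is the multiplicative update with d_i(w) = tr(M(w)^{-1} D(M(w)^{-1}) M(w)^{-1} A_i) and (Tw)_i = w_i d_i(w)^λ / Σ_j w_j d_j(w)^λ. If Tw ≠ w, then ψ(M(Tw)^{-1}) < ψ(M(w)^{-1}) strictly. (Strict monotonicity of the algorithm for 0 < λ < 1.) -/
/-!
Put `Y = M(w)`, `X = M(Tw)` and `B = Y⁻¹ D(Y⁻¹) Y⁻¹`, so that `dᵢ = tr(B Aᵢ)`. The gradient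
inequality for `ψ` at `Y⁻¹` gives `ψ(X⁻¹) ≤ ψ(Y⁻¹) + tr(B Y X⁻¹ Y) - ∑ wᵢ dᵢ`. Writing
`Y X⁻¹ Y = 2 Y U - Uᵀ X U` with `U = X⁻¹ Y` and completing the square in each summand
`Aᵢ` bounds `tr(B Y X⁻¹ Y)` by `∑ wᵢ² dᵢ / (Tw)ᵢ = (∑ wⱼ dⱼ^λ) (∑ wᵢ dᵢ^(1-λ))`, and by
Chebyshev's sum inequality for the two increasing functions `t ↦ t^λ`, `t ↦ t^(1-λ)` this is
strictly less than `∑ wᵢ dᵢ` unless `d` is constant, in which case `Tw = w`.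
-/

open Matrix

namespace Matrix.PosSemidef

open scoped ComplexOrder MatrixOrder

variable {κ 𝕜 : Type*} [Fintype κ] [DecidableEq κ] [RCLike 𝕜] {A B : Matrix κ κ 𝕜}

lemma trace_mul_eq_trace_conjTranspose_mul_self (hA : A.PosSemidef) (hB : B.PosSemidef) :
    (A * B).trace = ((CFC.sqrt B * CFC.sqrt A)ᴴ * (CFC.sqrt B * CFC.sqrt A)).trace := by
  have hSA : (CFC.sqrt A)ᴴ = CFC.sqrt A := (CFC.sqrt_nonneg A).posSemidef.isHermitian.eq
  have hSB : (CFC.sqrt B)ᴴ = CFC.sqrt B := (CFC.sqrt_nonneg B).posSemidef.isHermitian.eq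
  conv_lhs => rw [← CFC.sqrt_mul_sqrt_self A hA.nonneg, ← CFC.sqrt_mul_sqrt_self B hB.nonneg]
  rw [conjTranspose_mul, hSA, hSB, ← trace_mul_cycle]
  simp only [Matrix.mul_assoc]

lemma trace_mul_nonneg_s17 (hA : A.PosSemidef) (hB : B.PosSemidef) : 0 ≤ (A * B).trace := by
  rw [trace_mul_eq_trace_conjTranspose_mul_self hA hB]
  exact (posSemidef_conjTranspose_mul_self _).trace_nonneg

lemma mul_eq_zero_of_trace_mul_eq_zero (hA : A.PosSemidef) (hB : B.PosSemidef)
    (h : (A * B).trace = 0) : A * B = 0 := by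
  have hSA : (CFC.sqrt A)ᴴ = CFC.sqrt A := (CFC.sqrt_nonneg A).posSemidef.isHermitian.eq
  have hSB : (CFC.sqrt B)ᴴ = CFC.sqrt B := (CFC.sqrt_nonneg B).posSemidef.isHermitian.eq
  rw [trace_mul_eq_trace_conjTranspose_mul_self hA hB,
    trace_conjTranspose_mul_self_eq_zero_iff] at h
  calc A * B = CFC.sqrt A * (CFC.sqrt B * CFC.sqrt A)ᴴ * CFC.sqrt B := by
        conv_lhs => rw [← CFC.sqrt_mul_sqrt_self A hA.nonneg, ← CFC.sqrt_mul_sqrt_self B hB.nonneg]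
        rw [conjTranspose_mul, hSA, hSB]
        simp only [Matrix.mul_assoc]
    _ = 0 := by rw [h]; simp

end Matrix.PosSemidef

section MatrixInequality

variable {ι κ : Type*} [Fintype ι] [Fintype κ]

lemma trace_mul_inv_sub_inv {R : Type*} [DecidableEq κ] [CommRing R]
    (E X : Matrix κ κ R) {Y : Matrix κ κ R} (hY : IsUnit Y.det) :
    (E * (X⁻¹ - Y⁻¹)).trace
      = (Y⁻¹ * E * Y⁻¹ * (Y * X⁻¹ * Y)).trace - (Y⁻¹ * E * Y⁻¹ * Y).trace := by
  simp only [Matrix.mul_assoc, nonsing_inv_mul_cancel_left _ _ hY, nonsing_inv_mul _ hY,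
    Matrix.mul_one, Matrix.mul_sub, trace_sub]
  rw [trace_mul_comm Y⁻¹, Matrix.mul_assoc, trace_mul_comm Y⁻¹, Matrix.mul_assoc,
    mul_nonsing_inv _ hY, Matrix.mul_one]

lemma trace_mul_transpose_mul_eq {A B : Matrix κ κ ℝ} (hA : A.IsSymm) (hB : B.IsSymm)
    (U : Matrix κ κ ℝ) : (B * Uᵀ * A).trace = (B * A * U).trace := by
  rw [← trace_transpose]
  simp only [transpose_mul, transpose_transpose, hA.eq, hB.eq]
  rw [trace_mul_comm, Matrix.mul_assoc, trace_mul_comm]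

variable [DecidableEq κ]

lemma trace_mul_quadratic_le {A B : Matrix κ κ ℝ} (hA : A.PosSemidef) (hB : B.PosSemidef)
    (U : Matrix κ κ ℝ) {a b : ℝ} (hb : 0 ≤ b) (hzero : b = 0 → B * A = 0) :
    2 * a * (B * A * U).trace - b * (B * (Uᵀ * A * U)).trace ≤ a ^ 2 / b * (B * A).trace := by
  rcases hb.eq_or_lt with rfl | hb
  · simp [hzero rfl]
  have hsymm : (B * Uᵀ * A).trace = (B * A * U).trace :=
    trace_mul_transpose_mul_eq (isHermitian_iff_isSymm.mp hA.isHermitian)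
      (isHermitian_iff_isSymm.mp hB.isHermitian) U
  have hsq : 0 ≤ (B * ((a • 1 - b • U)ᵀ * A * (a • 1 - b • U))).trace := by
    refine hB.trace_mul_nonneg_s17 ?_
    rw [← conjTranspose_eq_transpose_of_trivial]
    exact hA.conjTranspose_mul_mul_same (a • 1 - b • U)
  have hexpand : (B * ((a • 1 - b • U)ᵀ * A * (a • 1 - b • U))).trace =
      a ^ 2 * (B * A).trace - 2 * a * b * (B * A * U).trace
        + b ^ 2 * (B * (Uᵀ * A * U)).trace := by
    simp only [transpose_sub, transpose_smul, transpose_one, Matrix.sub_mul, Matrix.mul_sub,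
      Matrix.smul_mul, Matrix.mul_smul, Matrix.one_mul, Matrix.mul_one, trace_sub, trace_smul,
      smul_eq_mul]
    rw [← Matrix.mul_assoc B Uᵀ A, hsymm, ← Matrix.mul_assoc B A U]
    ring
  rw [div_mul_eq_mul_div, le_div_iff₀ hb]
  nlinarith

lemma trace_mul_sum_mul_inv_sum_mul_sum_le (A : ι → Matrix κ κ ℝ) (hA : ∀ i, (A i).PosSemidef)
    (w v : ι → ℝ) (hv : ∀ i, 0 ≤ v i) (hX : (∑ i, v i • A i).PosDef) {B : Matrix κ κ ℝ}
    (hB : B.PosSemidef) (hzero : ∀ i, v i = 0 → B * A i = 0) :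
    (B * ((∑ i, w i • A i) * (∑ i, v i • A i)⁻¹ * (∑ i, w i • A i))).trace
      ≤ ∑ i, w i ^ 2 / v i * (B * A i).trace := by
  set X := ∑ i, v i • A i
  set Y := ∑ i, w i • A i
  set U := X⁻¹ * Y
  have hXunit : IsUnit X.det := (isUnit_iff_isUnit_det X).mp hX.isUnit
  have hYsymm : Yᵀ = Y := by
    simp only [Y, transpose_sum, transpose_smul,
      fun i => (isHermitian_iff_isSymm.mp (hA i).isHermitian).eq]
  have hXsymm : Xᵀ = X := (isHermitian_iff_isSymm.mp hX.isHermitian).eq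
  have hsplit : (B * (Y * X⁻¹ * Y)).trace = 2 * (B * Y * U).trace - (B * (Uᵀ * X * U)).trace := by
    have hUXU : Uᵀ * X * U = Y * X⁻¹ * Y := by
      simp only [U, transpose_mul, transpose_nonsing_inv, hXsymm, hYsymm, Matrix.mul_assoc,
        nonsing_inv_mul_cancel_left _ _ hXunit]
    rw [hUXU, Matrix.mul_assoc B Y U, ← Matrix.mul_assoc Y]
    ring
  have hlin₁ : (B * Y * U).trace = ∑ i, w i * (B * A i * U).trace := by
    simp only [Y, Matrix.mul_sum, Matrix.sum_mul, trace_sum, Matrix.mul_smul, Matrix.smul_mul,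
      trace_smul, smul_eq_mul]
  have hlin₂ : (B * (Uᵀ * X * U)).trace = ∑ i, v i * (B * (Uᵀ * A i * U)).trace := by
    simp only [X, Matrix.mul_sum, Matrix.sum_mul, trace_sum, Matrix.mul_smul, Matrix.smul_mul,
      trace_smul, smul_eq_mul]
  rw [hsplit, hlin₁, hlin₂, Finset.mul_sum, ← Finset.sum_sub_distrib]
  refine Finset.sum_le_sum fun i _ => ?_
  have := trace_mul_quadratic_le (hA i) hB U (hv i) (hzero i) (a := w i)
  linarith

end MatrixInequality

section Chebyshev

variable {ι : Type*} [Fintype ι]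

lemma sum_sum_mul_sub_mul_sub {R : Type*} [CommRing R] (w f g : ι → R) :
    ∑ i, ∑ j, w i * w j * ((f i - f j) * (g i - g j))
      = 2 * ((∑ i, w i) * ∑ i, w i * (f i * g i) - (∑ i, w i * f i) * ∑ i, w i * g i) := by
  have h : ∀ i j, w i * w j * ((f i - f j) * (g i - g j)) =
      w j * (w i * (f i * g i)) - (w i * f i) * (w j * g j)
        - (w i * g i) * (w j * f j) + w i * (w j * (f j * g j)) := fun i j => by ring
  simp only [h, Finset.sum_add_distrib, Finset.sum_sub_distrib, ← Finset.mul_sum,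
    ← Finset.sum_mul]
  ring

lemma sum_mul_sum_lt_sum_mul_of_strictMonoOn {s : Set ℝ} {f g : ℝ → ℝ}
    (hf : StrictMonoOn f s) (hg : StrictMonoOn g s) {w d : ι → ℝ} (hw : ∀ i, 0 < w i)
    (hw1 : ∑ i, w i = 1) (hd : ∀ i, d i ∈ s) {i₀ j₀ : ι} (hne : d i₀ ≠ d j₀) :
    (∑ i, w i * f (d i)) * (∑ i, w i * g (d i)) < ∑ i, w i * (f (d i) * g (d i)) := by
  have hpair : ∀ i j, d i ≠ d j → 0 < (f (d i) - f (d j)) * (g (d i) - g (d j)) := by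
    intro i j hij
    rcases hij.lt_or_gt with h | h
    · exact mul_pos_of_neg_of_neg (sub_neg.mpr (hf (hd i) (hd j) h))
        (sub_neg.mpr (hg (hd i) (hd j) h))
    · exact mul_pos (sub_pos.mpr (hf (hd j) (hd i) h)) (sub_pos.mpr (hg (hd j) (hd i) h))
  have hnonneg : ∀ i j, 0 ≤ w i * w j * ((f (d i) - f (d j)) * (g (d i) - g (d j))) := by
    intro i j
    refine mul_nonneg (mul_pos (hw i) (hw j)).le ?_
    by_cases hij : d i = d j
    · simp [hij]
    · exact (hpair i j hij).le
  have hpos : 0 < ∑ i, ∑ j, w i * w j * ((f (d i) - f (d j)) * (g (d i) - g (d j))) :=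
    Finset.sum_pos' (fun i _ => Finset.sum_nonneg fun j _ => hnonneg i j)
      ⟨i₀, Finset.mem_univ _, Finset.sum_pos' (fun j _ => hnonneg i₀ j)
        ⟨j₀, Finset.mem_univ _, mul_pos (mul_pos (hw i₀) (hw j₀)) (hpair i₀ j₀ hne)⟩⟩
  rw [sum_sum_mul_sub_mul_sub, hw1, one_mul] at hpos
  linarith

lemma sum_sq_div_rpow_update_mul_lt {w d : ι → ℝ} (hw : ∀ i, 0 < w i) (hw1 : ∑ i, w i = 1)
    (hd : ∀ i, 0 ≤ d i) {i₀ j₀ : ι} (hne : d i₀ ≠ d j₀) {lam : ℝ} (hlam0 : 0 < lam)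
    (hlam1 : lam < 1) :
    ∑ i, w i ^ 2 / (w i * d i ^ lam / ∑ j, w j * d j ^ lam) * d i < ∑ i, w i * d i := by
  set S := ∑ j, w j * d j ^ lam
  have hterm : ∀ i, w i ^ 2 / (w i * d i ^ lam / S) * d i = S * (w i * d i ^ (1 - lam)) := by
    intro i
    rw [Real.rpow_sub' (hd i) (by linarith), Real.rpow_one]
    field_simp
  have hmul : ∀ i, d i ^ lam * d i ^ (1 - lam) = d i := fun i => by
    rw [← Real.rpow_add' (hd i) (by norm_num), add_sub_cancel, Real.rpow_one]
  have hcheb := sum_mul_sum_lt_sum_mul_of_strictMonoOn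
    (Real.strictMonoOn_rpow_Ici_of_exponent_pos hlam0)
    (Real.strictMonoOn_rpow_Ici_of_exponent_pos (sub_pos.mpr hlam1)) hw hw1 (s := Set.Ici 0)
    hd hne
  simp only [hterm, ← Finset.mul_sum, hmul] at hcheb ⊢
  exact hcheb

end Chebyshev

theorem stmt_17_general {n m : ℕ} (hm : 0 < m)
    (A : Fin n → Matrix (Fin m) (Fin m) ℝ) (hA : ∀ i, (A i).PosSemidef)
    (ψ : Matrix (Fin m) (Fin m) ℝ → ℝ)
    (D : Matrix (Fin m) (Fin m) ℝ → Matrix (Fin m) (Fin m) ℝ)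
    (hDpsd : ∀ M : Matrix (Fin m) (Fin m) ℝ, M.PosDef → (D M).PosSemidef)
    (hconc : ∀ M₁ M₂ : Matrix (Fin m) (Fin m) ℝ, M₁.PosDef → M₂.PosDef →
      ψ M₂ ≤ ψ M₁ + (D M₁ * (M₂ - M₁)).trace)
    (M : (Fin n → ℝ) → Matrix (Fin m) (Fin m) ℝ)
    (hM : ∀ v : Fin n → ℝ, M v = ∑ i, v i • A i)
    (lam : ℝ) (hlam0 : 0 < lam) (hlam1 : lam < 1)
    (w : Fin n → ℝ) (hw : ∀ i, 0 < w i) (hw1 : ∑ i, w i = 1)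
    (d : Fin n → ℝ)
    (hd : ∀ i, d i = ((M w)⁻¹ * D ((M w)⁻¹) * (M w)⁻¹ * A i).trace)
    (Tw : Fin n → ℝ)
    (hTw : ∀ i, Tw i = w i * d i ^ lam / ∑ j, w j * d j ^ lam)
    (hMwpos : (M w).PosDef)
    (hMTwpos : (M Tw).PosDef)
    (hne : Tw ≠ w) :
    ψ ((M Tw)⁻¹) < ψ ((M w)⁻¹) := by
  set B := (M w)⁻¹ * D ((M w)⁻¹) * (M w)⁻¹
  have hB : B.PosSemidef := by
    have h := (hDpsd _ hMwpos.inv).conjTranspose_mul_mul_same (M w)⁻¹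
    rwa [hMwpos.inv.isHermitian.eq] at h
  have hd0 : ∀ i, 0 ≤ d i := fun i => hd i ▸ hB.trace_mul_nonneg_s17 (hA i)
  have hS : ∑ j, w j * d j ^ lam ≠ 0 := by
    intro hS
    have : Nonempty (Fin m) := ⟨⟨0, hm⟩⟩
    have hTw0 : Tw = 0 := funext fun i => by simp [hTw, hS]
    simpa [hTw0, hM] using hMTwpos.trace_pos
  obtain ⟨i₀, j₀, hdne⟩ : ∃ i j, d i ≠ d j := by
    by_contra! hconst
    refine hne (funext fun i => ?_)
    have hSi : ∑ j, w j * d j ^ lam = d i ^ lam := by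
      simp_rw [hconst _ i, ← Finset.sum_mul, hw1, one_mul]
    rw [hTw, hSi, mul_div_cancel_right₀ _ (hSi ▸ hS)]
  have hTw0 : ∀ i, 0 ≤ Tw i := fun i => by
    rw [hTw]
    exact div_nonneg (mul_nonneg (hw i).le (Real.rpow_nonneg (hd0 i) _))
      (Finset.sum_nonneg fun j _ => mul_nonneg (hw j).le (Real.rpow_nonneg (hd0 j) _))
  have hzero : ∀ i, Tw i = 0 → B * A i = 0 := fun i h => by
    refine hB.mul_eq_zero_of_trace_mul_eq_zero (hA i) ?_
    simp only [hTw, div_eq_zero_iff, mul_eq_zero, Real.rpow_eq_zero (hd0 i) hlam0.ne',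
      (hw i).ne', hS, false_or, or_false] at h
    rw [← hd, h]
  have hkey := trace_mul_sum_mul_inv_sum_mul_sum_le A hA w Tw hTw0 (hM Tw ▸ hMTwpos) hB hzero
  rw [← hM, ← hM] at hkey
  have hBY : (B * M w).trace = ∑ i, w i * d i := by
    simp only [hM w, Matrix.mul_sum, trace_sum, Matrix.mul_smul, trace_smul, smul_eq_mul, hd]
  calc ψ (M Tw)⁻¹ ≤ ψ (M w)⁻¹ + (D (M w)⁻¹ * ((M Tw)⁻¹ - (M w)⁻¹)).trace :=
        hconc _ _ hMwpos.inv hMTwpos.inv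
    _ = ψ (M w)⁻¹ + ((B * (M w * (M Tw)⁻¹ * M w)).trace - ∑ i, w i * d i) := by
        rw [trace_mul_inv_sub_inv _ _ ((isUnit_iff_isUnit_det _).mp hMwpos.isUnit), hBY]
    _ ≤ ψ (M w)⁻¹ + (∑ i, w i ^ 2 / Tw i * d i - ∑ i, w i * d i) := by
        simpa only [← hd, add_le_add_iff_left, sub_le_sub_iff_right] using hkey
    _ < ψ (M w)⁻¹ := by
        have := sum_sq_div_rpow_update_mul_lt hw hw1 hd0 hdne hlam0 hlam1
        simp only [← hTw] at this
        linarith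

/-- Strict monotonicity of the multiplicative algorithm for `0 < lam < 1`:
if `Tw ≠ w` then `ψ(M(Tw)⁻¹) < ψ(M(w)⁻¹)` strictly. -/
theorem stmt_17 {n m : ℕ} (hn : 0 < n) (hm : 0 < m)
    (A : Fin n → Matrix (Fin m) (Fin m) ℝ) (hA : ∀ i, (A i).PosSemidef)
    (ψ : Matrix (Fin m) (Fin m) ℝ → ℝ)
    (D : Matrix (Fin m) (Fin m) ℝ → Matrix (Fin m) (Fin m) ℝ)
    (hDpsd : ∀ M : Matrix (Fin m) (Fin m) ℝ, M.PosDef → (D M).PosSemidef)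
    (hconc : ∀ M₁ M₂ : Matrix (Fin m) (Fin m) ℝ, M₁.PosDef → M₂.PosDef →
      ψ M₂ ≤ ψ M₁ + (D M₁ * (M₂ - M₁)).trace)
    (M : (Fin n → ℝ) → Matrix (Fin m) (Fin m) ℝ)
    (hM : ∀ v : Fin n → ℝ, M v = ∑ i, v i • A i)
    (lam : ℝ) (hlam0 : 0 < lam) (hlam1 : lam < 1)
    (w : Fin n → ℝ) (hw : ∀ i, 0 < w i) (hw1 : ∑ i, w i = 1)
    (d : Fin n → ℝ)
    (hd : ∀ i, d i = ((M w)⁻¹ * D ((M w)⁻¹) * (M w)⁻¹ * A i).trace)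
    (Tw : Fin n → ℝ)
    (hTw : ∀ i, Tw i = w i * d i ^ lam / ∑ j, w j * d j ^ lam)
    (hMwpos : (M w).PosDef)
    (hDA : ∀ i, D ((M w)⁻¹) * A i ≠ 0)
    (hMTwpos : (M Tw).PosDef)
    (hne : Tw ≠ w) :
    ψ ((M Tw)⁻¹) < ψ ((M w)⁻¹) :=
  stmt_17_general hm A hA ψ D hDpsd hconc M hM lam hlam0 hlam1 w hw hw1 d hd Tw hTw hMwpos hMTwpos
    hne
end

section
/- Let n = m = 2, z_1 = 1, z_2 = -1, x_i = (1, z_i)ᵀ and A_i = x_i x_iᵀ. For any probability vector w = (w_1, w_2) with w_1, w_2 > 0, the iteration (alg2) with λ = 1, namely w'_i = w_i (z_i - z̄)ᵀ M_c(w)^{-1} (z_i - z̄) / (m-1) where z̄ = w_1 z_1 + w_2 z_2 and M_c(w) = Σ_i w_i (z_i - z̄)(z_i - z̄)ᵀ, maps (w_1, w_2) to (w_2, w_1). In particular, unless w_1 = w_2 = 1/2, the algorithm oscillates between two distinct points and does not converge. (Non-convergence example for λ = 1: the monotonicity is not strict.) -/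
/-!
With `z₁ = 1, z₂ = -1` and `w₁ + w₂ = 1`, the weighted mean is `z̄ = w₁ - w₂`, so
`1 - z̄ = 2 w₂`, `-1 - z̄ = -2 w₁` and `M_c(w) = 4 w₁ w₂`. The update therefore sends
`w₁ ↦ w₁ · 4 w₂² / (4 w₁ w₂) = w₂` and symmetrically `w₂ ↦ w₁`: the map swaps the two
weights. Its orbit then alternates between `(w₁, w₂)` and `(w₂, w₁)`, and a sequence whose
even and odd terms are constant at two distinct points has no limit.
-/

open Filter Topology

theorem update_eq_swap_of_two_points {a b z M : ℝ} (ha : 0 < a) (hb : 0 < b)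
    (hab : a + b = 1) (hz : z = a * 1 + b * (-1))
    (hM : M = a * (1 - z) ^ 2 + b * (-1 - z) ^ 2) :
    (a * (1 - z) ^ 2 / M, b * (-1 - z) ^ 2 / M) = (b, a) := by
  have hz_left : 1 - z = 2 * b := by rw [hz]; linarith
  have hz_right : -1 - z = -(2 * a) := by rw [hz]; linarith
  have hM_eq : M = 4 * a * b := by
    rw [hM, hz_left, hz_right]; linear_combination 4 * a * b * hab
  rw [hz_left, hz_right, hM_eq, Prod.mk.injEq]
  constructor <;> field_simp <;> ring

theorem Function.not_tendsto_iterate_of_isPeriodicPt_two {X : Type*} [TopologicalSpace X]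
    [T1Space X] {f : X → X} {x : X} (hx : Function.IsPeriodicPt f 2 x) (hfx : f x ≠ x)
    (L : X) : ¬ Tendsto (fun n => f^[n] x) atTop (𝓝 L) := by
  intro hL
  have hdouble : StrictMono fun n : ℕ => n * 2 := strictMono_id.mul_const two_pos
  have hsub := hL.comp hdouble.tendsto_atTop
  have hsub_succ := hL.comp ((tendsto_add_atTop_nat 1).comp hdouble.tendsto_atTop)
  have heven : ∀ n, f^[n * 2] x = x := fun n => (hx.const_mul n).eq
  have hodd : ∀ n, f^[n * 2 + 1] x = f x := fun n => by
    rw [Function.iterate_succ_apply', heven]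
  simp only [Function.comp_def, heven, hodd, tendsto_const_nhds_iff] at hsub hsub_succ
  exact hfx (hsub_succ.trans hsub.symm)

/-- Non-convergence example for `λ = 1`: with `n = m = 2`, `z₁ = 1`,
`z₂ = -1`, the iteration (alg2) maps `(w₁, w₂)` to `(w₂, w₁)`; in particular,
unless `w₁ = w₂ = 1/2`, the algorithm oscillates between two distinct points
and does not converge. Here `z̄(v) = v₁·1 + v₂·(-1)` and
`M_c(v) = v₁(1 - z̄)² + v₂(-1 - z̄)²` is a `1×1` matrix (a real number), and
the update reads `w'ᵢ = wᵢ (zᵢ - z̄)² / M_c(w)` (with `m - 1 = 1`). -/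
theorem stmt_19
    (zbar Mc : ℝ × ℝ → ℝ)
    (hzbar : ∀ v : ℝ × ℝ, zbar v = v.1 * 1 + v.2 * (-1))
    (hMc : ∀ v : ℝ × ℝ, Mc v = v.1 * (1 - zbar v) ^ 2 + v.2 * (-1 - zbar v) ^ 2)
    (T : ℝ × ℝ → ℝ × ℝ)
    (hT : ∀ v : ℝ × ℝ, T v =
      (v.1 * (1 - zbar v) ^ 2 / Mc v, v.2 * (-1 - zbar v) ^ 2 / Mc v))
    (w₁ w₂ : ℝ) (hw₁ : 0 < w₁) (hw₂ : 0 < w₂) (hsum : w₁ + w₂ = 1) :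
    T (w₁, w₂) = (w₂, w₁) ∧
    (w₁ ≠ 1 / 2 →
      ∀ L : ℝ × ℝ, ¬ Tendsto (fun t => T^[t] (w₁, w₂)) atTop (𝓝 L)) := by
  have hswap : ∀ a b : ℝ, 0 < a → 0 < b → a + b = 1 → T (a, b) = (b, a) :=
    fun a b ha hb hab => by
      rw [hT]; exact update_eq_swap_of_two_points ha hb hab (hzbar _) (hMc _)
  have hT₁ : T (w₁, w₂) = (w₂, w₁) := hswap w₁ w₂ hw₁ hw₂ hsum
  refine ⟨hT₁, fun hne => ?_⟩
  have hperiodic : Function.IsPeriodicPt T 2 (w₁, w₂) := by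
    change T (T (w₁, w₂)) = (w₁, w₂)
    rw [hT₁, hswap w₂ w₁ hw₂ hw₁ (by linarith)]
  have hmoves : T (w₁, w₂) ≠ (w₁, w₂) := by
    rw [hT₁, Ne, Prod.mk.injEq]
    exact fun h => hne (by linarith [h.1])
  exact Function.not_tendsto_iterate_of_isPeriodicPt_two hperiodic hmoves
end
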